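/- arXiv:1204.5488 — 9 statements merged into one kernel-verified Lean document; each statement's English description precedes it below -/
import Mathlib

section
/- It holds that α₀ = α − sup{ε ∈ [0,1] : αF_s − εF_b is a sub-CDF}. -/
open Filter Topology

/-- A cumulative distribution function: non-decreasing, right-continuous,
tending to 0 at -∞ and to 1 at +∞. -/
def IsCDF (G : ℝ → ℝ) : Prop :=
  Monotone G ∧ (∀ x : ℝ, ContinuousWithinAt G (Set.Ici x) x) ∧
    Tendsto G atBot (𝓝 0) ∧ Tendsto G atTop (𝓝 1)

/-- A sub-CDF: non-decreasing, right-continuous, taking values in [0,1]. -/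
def IsSubCDF (G : ℝ → ℝ) : Prop :=
  Monotone G ∧ (∀ x : ℝ, ContinuousWithinAt G (Set.Ici x) x) ∧
    ∀ x : ℝ, G x ∈ Set.Icc (0 : ℝ) 1

/-- The identifiable mixing proportion α₀. -/
noncomputable def alpha0 (F Fb : ℝ → ℝ) : ℝ :=
  sInf {γ : ℝ | γ ∈ Set.Ioc (0 : ℝ) 1 ∧
    IsCDF (fun x => (F x - (1 - γ) * Fb x) / γ)}

/-- Lemma 2 (first part): α₀ = α − sup{ε ∈ [0,1] : αF_s − εF_b is a sub-CDF}. -/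
theorem alpha0_eq_alpha_sub_sSup
    (Fs Fb : ℝ → ℝ) (hFs : IsCDF Fs) (hFb : IsCDF Fb) (hne : Fs ≠ Fb)
    (α : ℝ) (hα : α ∈ Set.Ioc (0 : ℝ) 1)
    (F : ℝ → ℝ) (hF : F = fun x => α * Fs x + (1 - α) * Fb x) :
    alpha0 F Fb =
      α - sSup {ε : ℝ | ε ∈ Set.Icc (0 : ℝ) 1 ∧
        IsSubCDF (fun x => α * Fs x - ε * Fb x)} := by
  obtain ⟨hα0, hα1⟩ := hα
  obtain ⟨hFsm, hFsc, hFsb, hFst⟩ := hFs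
  obtain ⟨hFbm, hFbc, hFbb, hFbt⟩ := hFb
  set S : Set ℝ := {ε : ℝ | ε ∈ Set.Icc (0 : ℝ) 1 ∧
      IsSubCDF (fun x => α * Fs x - ε * Fb x)} with hS
  set T : Set ℝ := {γ : ℝ | γ ∈ Set.Ioc (0 : ℝ) 1 ∧
      IsCDF (fun x => (F x - (1 - γ) * Fb x) / γ)} with hT
  -- basic bounds on Fs
  have hFs0 : ∀ x, (0:ℝ) ≤ Fs x := fun x => hFsm.le_of_tendsto hFsb x
  have hFs1 : ∀ x, Fs x ≤ 1 := fun x => hFsm.ge_of_tendsto hFst x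
  -- limits and continuity of H_ε := α Fs - ε Fb
  have Hlimb : ∀ ε : ℝ, Tendsto (fun x => α * Fs x - ε * Fb x) atBot (𝓝 0) := by
    intro ε
    have := (hFsb.const_mul α).sub (hFbb.const_mul ε)
    simpa using this
  have Hlimt : ∀ ε : ℝ, Tendsto (fun x => α * Fs x - ε * Fb x) atTop (𝓝 (α - ε)) := by
    intro ε
    have := (hFst.const_mul α).sub (hFbt.const_mul ε)
    simpa using this
  have Hcont : ∀ (ε : ℝ) (x : ℝ),
      ContinuousWithinAt (fun x => α * Fs x - ε * Fb x) (Set.Ici x) x := by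
    intro ε x
    exact ((hFsc x).const_mul α).sub ((hFbc x).const_mul ε)
  -- monotonicity of α Fs
  have h0mono : Monotone (fun x => α * Fs x - (0:ℝ) * Fb x) := by
    intro x y hxy
    simp only [zero_mul, sub_zero]
    exact mul_le_mul_of_nonneg_left (hFsm hxy) (le_of_lt hα0)
  -- if H_ε monotone then ε < α (uses hne)
  have eps_lt : ∀ ε : ℝ, Monotone (fun x => α * Fs x - ε * Fb x) → ε < α := by
    intro ε hmono
    have hle : ∀ x, α * Fs x - ε * Fb x ≤ α - ε := fun x => hmono.ge_of_tendsto (Hlimt ε) x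
    have hge : ∀ x, (0:ℝ) ≤ α * Fs x - ε * Fb x := fun x => hmono.le_of_tendsto (Hlimb ε) x
    have h1 : ε ≤ α := by linarith [hge 0, hle 0]
    rcases h1.lt_or_eq with h | h
    · exact h
    · exfalso
      apply hne
      funext x
      have h2 := hge x
      have h3 := hle x
      rw [h] at h2 h3
      have h4 : α * Fs x = α * Fb x := by linarith
      exact mul_left_cancel₀ (ne_of_gt hα0) h4
  -- S is nonempty (0 ∈ S)
  have h0S : (0:ℝ) ∈ S := by
    refine ⟨⟨le_refl 0, zero_le_one⟩, h0mono, Hcont 0, ?_⟩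
    intro x
    simp only [zero_mul, sub_zero]
    constructor
    · exact mul_nonneg (le_of_lt hα0) (hFs0 x)
    · calc α * Fs x ≤ 1 * 1 := mul_le_mul hα1 (hFs1 x) (hFs0 x) zero_le_one
        _ = 1 := one_mul 1
  have hSne : S.Nonempty := ⟨0, h0S⟩
  have hSbdd : BddAbove S := ⟨1, fun ε hε => hε.1.2⟩
  have hTbdd : BddBelow T := ⟨0, fun γ hγ => le_of_lt hγ.1.1⟩
  -- membership in T from ε ≥ 0 with H_ε monotone
  have memT : ∀ ε : ℝ, 0 ≤ ε → Monotone (fun x => α * Fs x - ε * Fb x) → (α - ε) ∈ T := by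
    intro ε hε0 hmono
    have hεα : ε < α := eps_lt ε hmono
    have hγ0 : 0 < α - ε := by linarith
    have hkey : (fun x => (F x - (1 - (α - ε)) * Fb x) / (α - ε))
        = fun x => (α * Fs x - ε * Fb x) / (α - ε) := by
      funext x; rw [hF]; ring_nf
    refine ⟨⟨hγ0, by linarith⟩, ?_⟩
    rw [hkey]
    refine ⟨hmono.div_const (le_of_lt hγ0), fun x => (Hcont ε x).div_const _, ?_, ?_⟩
    · have := (Hlimb ε).div_const (α - ε)
      simpa using this
    · have := (Hlimt ε).div_const (α - ε)
      rwa [div_self (ne_of_gt hγ0)] at this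
  -- membership in T gives monotonicity of H_{α-γ}
  have monoOfT : ∀ γ : ℝ, γ ∈ T → Monotone (fun x => α * Fs x - (α - γ) * Fb x) := by
    intro γ hγ
    have hγ0 : (0:ℝ) < γ := hγ.1.1
    have hkey : (fun x => α * Fs x - (α - γ) * Fb x)
        = fun x => γ * ((F x - (1 - γ) * Fb x) / γ) := by
      funext x
      rw [hF]
      field_simp
      ring
    rw [hkey]
    intro x y hxy
    exact mul_le_mul_of_nonneg_left (hγ.2.1 hxy) (le_of_lt hγ0)
  -- T is nonempty (α ∈ T)
  have hTne : T.Nonempty := ⟨α, by simpa using memT 0 le_rfl h0mono⟩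
  -- direction 1 : α - sSup S ≤ sInf T
  have d1 : α - sSup S ≤ sInf T := by
    apply le_csInf hTne
    intro γ hγ
    have hmono := monoOfT γ hγ
    rcases le_or_gt (α - γ) 0 with h | h
    · have h0 : (0:ℝ) ≤ sSup S := le_csSup hSbdd h0S
      linarith
    · -- α - γ ∈ S
      have hεα : α - γ < α := by linarith [hγ.1.1]
      have hmem : (α - γ) ∈ S := by
        refine ⟨⟨le_of_lt h, by linarith [hγ.1.2]⟩, hmono, Hcont _, ?_⟩
        intro x
        simp only [Set.mem_Icc]
        constructor
        · exact hmono.le_of_tendsto (Hlimb _) x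
        · have := hmono.ge_of_tendsto (Hlimt (α - γ)) x
          have hγ1 : γ ≤ 1 := hγ.1.2
          linarith
      linarith [le_csSup hSbdd hmem]
  -- direction 2 : sSup S ≤ α - sInf T
  have d2 : sSup S ≤ α - sInf T := by
    apply csSup_le hSne
    intro ε hε
    have hmem : (α - ε) ∈ T := memT ε hε.1.1 hε.2.1
    have := csInf_le hTbdd hmem
    linarith
  show sInf T = α - sSup S
  linarith
end

section
/- α₀ = 0 if and only if F = F_b (i.e., F(x) = F_b(x) for all x ∈ ℝ). -/
open Filter Topology

/-! If `G = (F - (1 - γ) Fb) / γ` is a CDF then `F - Fb = γ (G - Fb)`, and `|G - Fb| ≤ 1` because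
both take values in `[0, 1]`; hence every admissible `γ`, and so `α₀`, bounds `|F - Fb|`
pointwise. The true proportion `α` is admissible (it recovers `Fs`), so the infimum is over a
nonempty set and `α₀ = 0` forces `F = Fb`. Conversely, if `F = Fb` every `γ ∈ (0, 1]` is
admissible and `α₀ = inf (0, 1] = 0`. -/

namespace IsCDF

variable {G : ℝ → ℝ}

lemma nonneg (hG : IsCDF G) (x : ℝ) : 0 ≤ G x :=
  le_of_tendsto hG.2.2.1 ((eventually_le_atBot x).mono fun _ hy => hG.1 hy)

lemma le_one (hG : IsCDF G) (x : ℝ) : G x ≤ 1 :=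
  ge_of_tendsto hG.2.2.2 ((eventually_ge_atTop x).mono fun _ hy => hG.1 hy)

end IsCDF

lemma abs_sub_le_of_isCDF_div {F Fb : ℝ → ℝ} {γ : ℝ} (hγ : 0 < γ) (hFb : IsCDF Fb)
    (hG : IsCDF fun x => (F x - (1 - γ) * Fb x) / γ) (x : ℝ) : |F x - Fb x| ≤ γ := by
  set g := (F x - (1 - γ) * Fb x) / γ
  have hF : F x - Fb x = γ * (g - Fb x) := by simp only [g]; field_simp; ring
  have hg : |g - Fb x| ≤ 1 :=
    abs_sub_le_of_nonneg_of_le (hG.nonneg x) (hG.le_one x) (hFb.nonneg x) (hFb.le_one x)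
  calc |F x - Fb x| = γ * |g - Fb x| := by rw [hF, abs_mul, abs_of_pos hγ]
    _ ≤ γ := mul_le_of_le_one_right hγ.le hg

lemma abs_sub_le_alpha0 {F Fb : ℝ → ℝ} (hFb : IsCDF Fb)
    (hne : ∃ γ ∈ Set.Ioc (0 : ℝ) 1, IsCDF fun x => (F x - (1 - γ) * Fb x) / γ) (x : ℝ) :
    |F x - Fb x| ≤ alpha0 F Fb := by
  obtain ⟨γ, hγ, hG⟩ := hne
  exact le_csInf ⟨γ, hγ, hG⟩ fun γ' ⟨hγ', hG'⟩ => abs_sub_le_of_isCDF_div hγ'.1 hFb hG' x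

lemma mixture_sub_div_eq {Fs Fb : ℝ → ℝ} {α : ℝ} (hα : α ≠ 0) :
    (fun x => (α * Fs x + (1 - α) * Fb x - (1 - α) * Fb x) / α) = Fs := by
  funext x
  field_simp
  ring

lemma alpha0_self {Fb : ℝ → ℝ} (hFb : IsCDF Fb) : alpha0 Fb Fb = 0 := by
  have hset : {γ : ℝ | γ ∈ Set.Ioc (0 : ℝ) 1 ∧
      IsCDF (fun x => (Fb x - (1 - γ) * Fb x) / γ)} = Set.Ioc 0 1 := by
    ext γ
    refine ⟨And.left, fun hγ => ⟨hγ, ?_⟩⟩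
    convert hFb using 1
    funext x
    field_simp [hγ.1.ne']
    ring
  rw [alpha0, hset, csInf_Ioc zero_lt_one]

theorem alpha0_eq_zero_iff_general
    (Fs Fb : ℝ → ℝ) (hFs : IsCDF Fs) (hFb : IsCDF Fb)
    (α : ℝ) (hα : α ∈ Set.Ioc (0 : ℝ) 1)
    (F : ℝ → ℝ) (hF : F = fun x => α * Fs x + (1 - α) * Fb x) :
    alpha0 F Fb = 0 ↔ ∀ x : ℝ, F x = Fb x := by
  constructor
  · intro h0 x
    have hadm : ∃ γ ∈ Set.Ioc (0 : ℝ) 1, IsCDF fun x => (F x - (1 - γ) * Fb x) / γ :=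
      ⟨α, hα, by rwa [hF, mixture_sub_div_eq hα.1.ne']⟩
    have hle := abs_sub_le_alpha0 hFb hadm x
    rw [h0] at hle
    exact sub_eq_zero.mp (abs_nonpos_iff.mp hle)
  · intro h
    obtain rfl : F = Fb := funext h
    exact alpha0_self hFb

/-- Lemma 2 (second part): α₀ = 0 if and only if F = F_b. -/
theorem alpha0_eq_zero_iff
    (Fs Fb : ℝ → ℝ) (hFs : IsCDF Fs) (hFb : IsCDF Fb) (hne : Fs ≠ Fb)
    (α : ℝ) (hα : α ∈ Set.Ioc (0 : ℝ) 1)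
    (F : ℝ → ℝ) (hF : F = fun x => α * Fs x + (1 - α) * Fb x) :
    alpha0 F Fb = 0 ↔ ∀ x : ℝ, F x = Fb x :=
  alpha0_eq_zero_iff_general Fs Fb hFs hFb α hα F hF
end

section
/- If the set of atoms of μ_b is not contained in the set of atoms of μ_s, then α₀ = α. If the set of atoms of μ_b is contained in the set of atoms of μ_s, then α₀ = α·(1 − inf{μ_s({x})/μ_b({x}) : x an atom of μ_b}); in particular, in this case α₀ = α if and only if inf{μ_s({x})/μ_b({x}) : x an atom of μ_b} = 0. -/
open Filter Topology

open MeasureTheory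

/-! For `0 < γ`, `(F - (1 - γ) F_b) / γ = p F_s + (1 - p) F_b` with `p = α / γ`. Such an affine
combination of CDFs has the right limits and is right-continuous, so it is a CDF iff it is monotone,
i.e. iff `(p - 1) μ_b ≤ p μ_s` on half-open intervals. Shrinking the intervals to a point and,
conversely, summing over the countably many atoms that carry `μ_b`, this holds iff
`(α - γ) μ_b {x} ≤ α μ_s {x}` at every atom `x` of `μ_b`, i.e. iff `α (1 - r) ≤ γ` where `r` is the
infimum of the ratios `μ_s {x} / μ_b {x}`. As `μ_s ≠ μ_b` forces `r < 1`, this gives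
`α₀ = α (1 - r)`; an atom of `μ_b` that is not an atom of `μ_s` makes `r = 0`. -/

open Set

namespace MeasureTheory

lemma nonempty_setOf_measure_singleton_pos {X : Type*} [MeasurableSpace X] {μ : Measure X}
    [NeZero μ] (hμ : μ {x | 0 < μ {x}}ᶜ = 0) : {x | 0 < μ {x}}.Nonempty := by
  by_contra h
  rw [not_nonempty_iff_eq_empty.1 h, compl_empty, Measure.measure_univ_eq_zero] at hμ
  exact NeZero.ne μ hμ

variable {X : Type*} [MeasurableSpace X] [MeasurableSingletonClass X]

lemma measure_eq_tsum_singleton (μ : Measure X) {s : Set X} (hs : s.Countable) :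
    μ s = ∑' x : s, μ {(x : X)} := by
  conv_lhs => rw [← s.biUnion_of_singleton]
  exact measure_biUnion hs (fun _ _ _ _ h => disjoint_singleton.2 h)
    fun x _ => measurableSet_singleton x

lemma countable_setOf_measure_singleton_pos (μ : Measure X) [SFinite μ] :
    {x | 0 < μ {x}}.Countable :=
  Measure.countable_meas_pos_of_disjoint_iUnion (fun x => measurableSet_singleton x)
    fun _ _ h => disjoint_singleton.2 h

lemma Measure.le_of_countable_of_singleton_le {μ ν : Measure X} {A : Set X} (hA : A.Countable)
    (hμA : μ Aᶜ = 0) (h : ∀ a ∈ A, μ {a} ≤ ν {a}) : μ ≤ ν := by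
  intro s
  have hsA : (s ∩ A).Countable := hA.mono inter_subset_right
  calc μ s = μ (s ∩ A) := (measure_inter_conull hμA).symm
    _ = ∑' x : ↥(s ∩ A), μ {(x : X)} := measure_eq_tsum_singleton μ hsA
    _ ≤ ∑' x : ↥(s ∩ A), ν {(x : X)} := ENNReal.tsum_le_tsum fun x => h x x.2.2
    _ = ν (s ∩ A) := (measure_eq_tsum_singleton ν hsA).symm
    _ ≤ ν s := measure_mono inter_subset_left

lemma mul_measureReal_le_of_forall_atom {μ ν : Measure X} [IsFiniteMeasure μ]
    [IsFiniteMeasure ν] {a c : ℝ} (ha : 0 ≤ a) (hν : ν {x | 0 < ν {x}}ᶜ = 0)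
    (h : ∀ x, 0 < ν {x} → c * ν.real {x} ≤ a * μ.real {x}) (s : Set X) :
    c * ν.real s ≤ a * μ.real s := by
  rcases le_or_gt c 0 with hc | hc
  · exact (mul_nonpos_of_nonpos_of_nonneg hc measureReal_nonneg).trans
      (mul_nonneg ha measureReal_nonneg)
  have hreal : ∀ t, c * ν.real t ≤ a * μ.real t ↔
      (ENNReal.ofReal c • ν) t ≤ (ENNReal.ofReal a • μ) t := fun t => by
    rw [← ENNReal.ofReal_le_ofReal_iff (mul_nonneg ha measureReal_nonneg),
      ENNReal.ofReal_mul hc.le, ENNReal.ofReal_mul ha, ofReal_measureReal, ofReal_measureReal]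
    rfl
  refine (hreal s).2 (Measure.le_of_countable_of_singleton_le
    (countable_setOf_measure_singleton_pos ν) ?_ (fun x hx => (hreal {x}).1 (h x hx)) s)
  rw [Measure.smul_apply, hν, smul_zero]

end MeasureTheory

lemma isCDF_measureReal_Iic (μ : Measure ℝ) [IsProbabilityMeasure μ] :
    IsCDF (fun x => μ.real (Iic x)) := by
  simp_rw [← ProbabilityTheory.cdf_eq_real]
  exact ⟨ProbabilityTheory.monotone_cdf μ, (ProbabilityTheory.cdf μ).right_continuous,
    ProbabilityTheory.tendsto_cdf_atBot μ, ProbabilityTheory.tendsto_cdf_atTop μ⟩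

lemma isCDF_mix_iff_monotone {G H : ℝ → ℝ} (hG : IsCDF G) (hH : IsCDF H) (p : ℝ) :
    IsCDF (fun x => p * G x + (1 - p) * H x) ↔ Monotone (fun x => p * G x + (1 - p) * H x) := by
  refine ⟨fun h => h.1, fun h => ⟨h, fun x => ?_, ?_, ?_⟩⟩
  · exact ((hG.2.1 x).const_mul p).add ((hH.2.1 x).const_mul (1 - p))
  · simpa using (hG.2.2.1.const_mul p).add (hH.2.2.1.const_mul (1 - p))
  · simpa using (hG.2.2.2.const_mul p).add (hH.2.2.2.const_mul (1 - p))

lemma measureReal_Iic_sub_Iic (μ : Measure ℝ) [IsFiniteMeasure μ] {x y : ℝ} (h : x ≤ y) :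
    μ.real (Iic y) - μ.real (Iic x) = μ.real (Ioc x y) := by
  rw [← Iic_sdiff_Iic, measureReal_sdiff (Iic_subset_Iic.2 h) measurableSet_Iic]

lemma monotone_mix_iff (μ ν : Measure ℝ) [IsFiniteMeasure μ] [IsFiniteMeasure ν] (p : ℝ) :
    Monotone (fun x => p * μ.real (Iic x) + (1 - p) * ν.real (Iic x)) ↔
      ∀ x y, x ≤ y → (p - 1) * ν.real (Ioc x y) ≤ p * μ.real (Ioc x y) := by
  refine forall_congr' fun x => forall_congr' fun y => imp_congr_right fun hxy => ?_
  rw [← measureReal_Iic_sub_Iic μ hxy, ← measureReal_Iic_sub_Iic ν hxy]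
  constructor <;> intro h <;> linarith

lemma tendsto_measureReal_Ioc_singleton (μ : Measure ℝ) [IsFiniteMeasure μ] (b : ℝ) :
    Tendsto (fun r => μ.real (Ioc (b - r) b)) (𝓝[>] 0) (𝓝 (μ.real {b})) := by
  have hInter : ⋂ r > (0 : ℝ), Ioc (b - r) b = {b} := by
    ext x
    simp only [mem_iInter, mem_Ioc, mem_singleton_iff]
    refine ⟨fun h => le_antisymm (h 1 one_pos).2 (le_of_forall_pos_lt_add fun r hr => ?_),
      fun hx _ hr => ⟨by linarith, hx.le⟩⟩
    linarith [(h r hr).1]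
  have := tendsto_measure_biInter_gt (μ := μ) (s := fun r => Ioc (b - r) b) (a := 0)
    (fun _ _ => measurableSet_Ioc.nullMeasurableSet)
    (fun _ _ _ hij => Ioc_subset_Ioc_left (by linarith)) ⟨1, one_pos, measure_ne_top μ _⟩
  rw [hInter] at this
  exact (ENNReal.tendsto_toReal (measure_ne_top μ _)).comp this

lemma mul_measureReal_singleton_le_of_Ioc {μ ν : Measure ℝ} [IsFiniteMeasure μ]
    [IsFiniteMeasure ν] {a c b : ℝ}
    (h : ∀ x < b, c * ν.real (Ioc x b) ≤ a * μ.real (Ioc x b)) :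
    c * ν.real {b} ≤ a * μ.real {b} :=
  le_of_tendsto_of_tendsto ((tendsto_measureReal_Ioc_singleton ν b).const_mul c)
    ((tendsto_measureReal_Ioc_singleton μ b).const_mul a)
    (eventually_nhdsWithin_of_forall fun _ hr => h _ (sub_lt_self b hr))

theorem isCDF_mix_iff {μ ν : Measure ℝ} [IsProbabilityMeasure μ] [IsProbabilityMeasure ν]
    (hν : ν {x | 0 < ν {x}}ᶜ = 0) {p : ℝ} (hp : 0 ≤ p) :
    IsCDF (fun x => p * μ.real (Iic x) + (1 - p) * ν.real (Iic x)) ↔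
      ∀ b, 0 < ν {b} → (p - 1) * ν.real {b} ≤ p * μ.real {b} := by
  rw [isCDF_mix_iff_monotone (isCDF_measureReal_Iic μ) (isCDF_measureReal_Iic ν),
    monotone_mix_iff]
  exact ⟨fun h b _ => mul_measureReal_singleton_le_of_Ioc fun x hx => h x b hx.le,
    fun h x y _ => mul_measureReal_le_of_forall_atom hp hν h _⟩

lemma div_sub_one_mul_le_iff {α γ m s : ℝ} (hγ : 0 < γ) (hm : 0 < m) :
    (α / γ - 1) * m ≤ α / γ * s ↔ α * (1 - s / m) ≤ γ := by
  rw [div_sub_one hγ.ne', div_mul_eq_mul_div, div_mul_eq_mul_div, div_le_div_iff_of_pos_right hγ,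
    mul_one_sub, mul_div_assoc', sub_le_comm, le_div_iff₀ hm]

lemma forall_mul_one_sub_le_iff {Q : Set ℝ} (hQ : Q.Nonempty) (hQb : BddBelow Q) {α γ : ℝ}
    (hα : 0 < α) : (∀ q ∈ Q, α * (1 - q) ≤ γ) ↔ α * (1 - sInf Q) ≤ γ := by
  have h : ∀ q, α * (1 - q) ≤ γ ↔ 1 - γ / α ≤ q := fun q => by
    rw [sub_le_comm, le_div_iff₀ hα, mul_comm]
  simp only [h, le_csInf_iff hQb hQ]

lemma sInf_ratio_lt_one {μ ν : Measure ℝ} [IsProbabilityMeasure μ] [IsProbabilityMeasure ν]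
    (hν : ν {x | 0 < ν {x}}ᶜ = 0) (hne : μ ≠ ν) :
    sInf ((fun x => μ.real {x} / ν.real {x}) '' {x | 0 < ν {x}}) < 1 := by
  by_contra! h
  refine hne (Measure.eq_of_le_of_isProbabilityMeasure
    (Measure.le_of_countable_of_singleton_le (countable_setOf_measure_singleton_pos ν) hν
      fun b hb => ?_)).symm
  have hb' : 0 < ν.real {b} := ENNReal.toReal_pos hb.ne' (measure_ne_top ν _)
  have : 1 ≤ μ.real {b} / ν.real {b} :=
    h.trans (csInf_le ⟨0, by rintro _ ⟨x, -, rfl⟩; positivity⟩ ⟨b, hb, rfl⟩)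
  rw [one_le_div hb'] at this
  exact (ENNReal.toReal_le_toReal (measure_ne_top ν _) (measure_ne_top μ _)).1 this

theorem alpha0_mix_eq {μs μb : Measure ℝ} [IsProbabilityMeasure μs] [IsProbabilityMeasure μb]
    (hμb : μb {x | 0 < μb {x}}ᶜ = 0) (hne : μs ≠ μb) {α : ℝ} (hα : α ∈ Ioc (0 : ℝ) 1) :
    alpha0 (fun x => α * μs.real (Iic x) + (1 - α) * μb.real (Iic x)) (fun x => μb.real (Iic x))
      = α * (1 - sInf ((fun x => μs.real {x} / μb.real {x}) '' {x | 0 < μb {x}})) := by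
  set R := (fun x => μs.real {x} / μb.real {x}) '' {x | 0 < μb {x}}
  have hR : R.Nonempty := (nonempty_setOf_measure_singleton_pos hμb).image _
  have hR0 : ∀ q ∈ R, 0 ≤ q := by rintro _ ⟨x, -, rfl⟩; positivity
  have hr0 : 0 ≤ sInf R := le_csInf hR hR0
  have hr1 : sInf R < 1 := sInf_ratio_lt_one hμb hne
  have hset : ∀ γ ∈ Ioc (0 : ℝ) 1,
      IsCDF (fun x => (α * μs.real (Iic x) + (1 - α) * μb.real (Iic x)
        - (1 - γ) * μb.real (Iic x)) / γ) ↔ α * (1 - sInf R) ≤ γ := fun γ hγ => by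
    have hmix : (fun x => (α * μs.real (Iic x) + (1 - α) * μb.real (Iic x)
        - (1 - γ) * μb.real (Iic x)) / γ)
        = fun x => α / γ * μs.real (Iic x) + (1 - α / γ) * μb.real (Iic x) := by
      have := hγ.1.ne'
      funext x; field_simp; ring
    rw [hmix, isCDF_mix_iff hμb (div_nonneg hα.1.le hγ.1.le),
      ← forall_mul_one_sub_le_iff hR ⟨0, hR0⟩ hα.1, forall_mem_image]
    exact forall_congr' fun b => forall_congr' fun hb =>
      div_sub_one_mul_le_iff hγ.1 (ENNReal.toReal_pos hb.ne' (measure_ne_top μb _))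
  have hmem : α * (1 - sInf R) ∈ Ioc (0 : ℝ) 1 :=
    ⟨mul_pos hα.1 (sub_pos.2 hr1), (mul_le_of_le_one_right hα.1.le (by linarith)).trans hα.2⟩
  unfold alpha0
  exact IsLeast.csInf_eq ⟨⟨hmem, (hset _ hmem).2 le_rfl⟩, fun γ hγ => (hset γ hγ.1).1 hγ.2⟩

theorem alpha0_discrete_general
    (μs μb : Measure ℝ) [IsProbabilityMeasure μs] [IsProbabilityMeasure μb]
    (hatomic_b : μb {x : ℝ | 0 < μb {x}}ᶜ = 0)
    (Fs Fb : ℝ → ℝ)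
    (hFs : Fs = fun x => (μs (Set.Iic x)).toReal)
    (hFb : Fb = fun x => (μb (Set.Iic x)).toReal)
    (hne : Fs ≠ Fb)
    (α : ℝ) (hα : α ∈ Set.Ioc (0 : ℝ) 1)
    (F : ℝ → ℝ) (hF : F = fun x => α * Fs x + (1 - α) * Fb x) :
    (¬ ({x : ℝ | 0 < μb {x}} ⊆ {x : ℝ | 0 < μs {x}}) → alpha0 F Fb = α) ∧
    (({x : ℝ | 0 < μb {x}} ⊆ {x : ℝ | 0 < μs {x}}) →
      alpha0 F Fb =
        α * (1 - sInf ((fun x => (μs {x}).toReal / (μb {x}).toReal) ''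
          {x : ℝ | 0 < μb {x}})) ∧
      (alpha0 F Fb = α ↔
        sInf ((fun x => (μs {x}).toReal / (μb {x}).toReal) ''
          {x : ℝ | 0 < μb {x}}) = 0)) := by
  set R := (fun x => (μs {x}).toReal / (μb {x}).toReal) '' {x : ℝ | 0 < μb {x}}
  have key : alpha0 F Fb = α * (1 - sInf R) := by
    subst hF hFs hFb
    exact alpha0_mix_eq hatomic_b (fun h => hne (h ▸ rfl)) hα
  refine ⟨fun hnsub => ?_, fun _ => ⟨key, ?_⟩⟩
  · obtain ⟨b, hb, hbs⟩ := not_subset.1 hnsub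
    have hbs0 : μs {b} = 0 := by simpa using hbs
    have hzero : IsLeast R 0 :=
      ⟨⟨b, hb, by simp [hbs0]⟩, by rintro _ ⟨x, -, rfl⟩; positivity⟩
    rw [key, hzero.csInf_eq, sub_zero, mul_one]
  · rw [key, mul_eq_left₀ hα.1.ne', sub_eq_self]

/-- Lemma 3: identifiability when both components are discrete (purely atomic)
probability measures. -/
theorem alpha0_discrete
    (μs μb : Measure ℝ) [IsProbabilityMeasure μs] [IsProbabilityMeasure μb]
    (hatomic_s : μs {x : ℝ | 0 < μs {x}}ᶜ = 0)
    (hatomic_b : μb {x : ℝ | 0 < μb {x}}ᶜ = 0)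
    (Fs Fb : ℝ → ℝ)
    (hFs : Fs = fun x => (μs (Set.Iic x)).toReal)
    (hFb : Fb = fun x => (μb (Set.Iic x)).toReal)
    (hne : Fs ≠ Fb)
    (α : ℝ) (hα : α ∈ Set.Ioc (0 : ℝ) 1)
    (F : ℝ → ℝ) (hF : F = fun x => α * Fs x + (1 - α) * Fb x) :
    (¬ ({x : ℝ | 0 < μb {x}} ⊆ {x : ℝ | 0 < μs {x}}) → alpha0 F Fb = α) ∧
    (({x : ℝ | 0 < μb {x}} ⊆ {x : ℝ | 0 < μs {x}}) →
      alpha0 F Fb =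
        α * (1 - sInf ((fun x => (μs {x}).toReal / (μb {x}).toReal) ''
          {x : ℝ | 0 < μb {x}})) ∧
      (alpha0 F Fb = α ↔
        sInf ((fun x => (μs {x}).toReal / (μb {x}).toReal) ''
          {x : ℝ | 0 < μb {x}}) = 0)) :=
  alpha0_discrete_general μs μb hatomic_b Fs Fb hFs hFb hne α hα F hF
end

section
/- If λ_s < λ_b then α₀ = α, and if λ_s > λ_b then α₀ = α·(1 − exp(λ_b − λ_s)). -/
open Filter Topology

/-- The CDF of the Poisson distribution with mean λ, viewed as a probability
distribution on ℝ supported on the non-negative integers. -/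
noncomputable def poissonCDF (lam : ℝ) (x : ℝ) : ℝ :=
  ∑' k : ℕ, if (k : ℝ) ≤ x then lam ^ k * Real.exp (-lam) / (Nat.factorial k) else 0

/-!
For `γ ∈ (0, 1]`, `(F - (1 - γ) F_b) / γ` is the step function on ℕ with weights
`w_k = (α/γ) p_s(k) + (1 - α/γ) p_b(k)`, which sum to `1`; it is therefore a CDF exactly when
every `w_k ≥ 0`, i.e. when `1 - γ/α ≤ p_s(k)/p_b(k)` for all `k`. Hence the admissible `γ` form
`(0, 1] ∩ [α (1 - r), ∞)` with `r = inf_k p_s(k)/p_b(k)`, and `α₀ = α (1 - r)`. For Poisson laws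
`p_s(k)/p_b(k) = e^{λ_b - λ_s} (λ_s/λ_b)^k` is geometric: its infimum is `0` if `λ_s < λ_b` and
its value `e^{λ_b - λ_s}` at `k = 0` if `λ_s > λ_b`.
-/

open Set

noncomputable def natCDF (f : ℕ → ℝ) (x : ℝ) : ℝ :=
  ∑' k : ℕ, if (k : ℝ) ≤ x then f k else 0

section NatCDF

variable {f g : ℕ → ℝ}

lemma Summable.ite_natCast_le (hf : Summable f) (x : ℝ) :
    Summable fun k : ℕ => if (k : ℝ) ≤ x then f k else 0 :=
  (hf.indicator {k : ℕ | (k : ℝ) ≤ x}).congr fun k => by simp [Set.indicator_apply]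

lemma natCDF_eq_sum_range {x : ℝ} {n : ℕ} (h : x < n) :
    natCDF f x = ∑ k ∈ Finset.range n, if (k : ℝ) ≤ x then f k else 0 :=
  tsum_eq_sum fun k hk => if_neg fun hkx => by
    have : (n : ℝ) ≤ k := by exact_mod_cast not_lt.mp (Finset.mem_range.not.mp hk)
    linarith

lemma natCDF_of_neg {x : ℝ} (hx : x < 0) : natCDF f x = 0 := by
  simpa using natCDF_eq_sum_range (f := f) (n := 0) (by simpa using hx)

lemma natCDF_natCast (n : ℕ) : natCDF f n = ∑ k ∈ Finset.range (n + 1), f k := by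
  rw [natCDF_eq_sum_range (n := n + 1) (by push_cast; linarith)]
  refine Finset.sum_congr rfl fun k hk => if_pos ?_
  exact_mod_cast Nat.lt_succ_iff.mp (Finset.mem_range.mp hk)

lemma natCDF_natCast_sub_half (n : ℕ) : natCDF f (n - 1 / 2) = ∑ k ∈ Finset.range n, f k := by
  rw [natCDF_eq_sum_range (show (n : ℝ) - 1 / 2 < n by linarith)]
  refine Finset.sum_congr rfl fun k hk => if_pos ?_
  have : (k : ℝ) + 1 ≤ n := by exact_mod_cast Finset.mem_range.mp hk
  linarith

lemma natCDF_natCast_sub_natCDF (n : ℕ) : natCDF f n - natCDF f (n - 1 / 2) = f n := by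
  rw [natCDF_natCast, natCDF_natCast_sub_half, Finset.sum_range_succ, add_sub_cancel_left]

lemma natCDF_eq_of_floor_eq {x y : ℝ} (h : ⌊x⌋ = ⌊y⌋) : natCDF f x = natCDF f y := by
  have hle : ∀ k : ℕ, (k : ℝ) ≤ x ↔ (k : ℝ) ≤ y := fun k => by
    rw [← Int.cast_natCast, ← Int.le_floor, ← Int.le_floor, h]
  simp only [natCDF, hle]

lemma natCDF_eq_natCDF_floor {x : ℝ} (hx : 0 ≤ x) : natCDF f x = natCDF f ⌊x⌋₊ :=
  natCDF_eq_of_floor_eq (by rw [Int.floor_natCast, Int.natCast_floor_eq_floor hx])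

lemma continuousWithinAt_Ici_natCDF (x : ℝ) :
    ContinuousWithinAt (natCDF f) (Ici x) x := by
  have hconst : natCDF f =ᶠ[𝓝[Ici x] x] fun _ => natCDF f x := by
    filter_upwards [Ico_mem_nhdsGE (Int.lt_floor_add_one x)] with y hy
    exact natCDF_eq_of_floor_eq (Int.floor_eq_iff.mpr ⟨(Int.floor_le x).trans hy.1, hy.2⟩)
  exact continuousWithinAt_const.congr_of_eventuallyEq hconst rfl

lemma tendsto_natCDF_atBot : Tendsto (natCDF f) atBot (𝓝 0) :=
  tendsto_const_nhds.congr' <| by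
    filter_upwards [eventually_lt_atBot 0] with x hx
    exact (natCDF_of_neg hx).symm

lemma tendsto_natCDF_atTop {a : ℝ} (hf : HasSum f a) : Tendsto (natCDF f) atTop (𝓝 a) := by
  have hsum : Tendsto (fun x : ℝ => ∑ k ∈ Finset.range (⌊x⌋₊ + 1), f k) atTop (𝓝 a) :=
    (hf.tendsto_sum_nat.comp (tendsto_add_atTop_nat 1)).comp tendsto_nat_floor_atTop
  refine hsum.congr' ?_
  filter_upwards [eventually_ge_atTop 0] with x hx
  rw [natCDF_eq_natCDF_floor hx, natCDF_natCast]

lemma monotone_natCDF (hf : ∀ k, 0 ≤ f k) (hs : Summable f) : Monotone (natCDF f) := by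
  intro x y hxy
  refine Summable.tsum_le_tsum (fun k => ?_) (hs.ite_natCast_le x) (hs.ite_natCast_le y)
  by_cases hkx : (k : ℝ) ≤ x
  · simp [hkx, hkx.trans hxy]
  · rw [if_neg hkx]
    split_ifs
    exacts [hf k, le_rfl]

lemma isCDF_natCDF_iff (hf : HasSum f 1) : IsCDF (natCDF f) ↔ ∀ k, 0 ≤ f k := by
  refine ⟨fun h k => ?_, fun h => ?_⟩
  · rw [← natCDF_natCast_sub_natCDF (f := f)]
    exact sub_nonneg.mpr (h.1 (by linarith))
  · exact ⟨monotone_natCDF h hf.summable, continuousWithinAt_Ici_natCDF,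
      tendsto_natCDF_atBot, tendsto_natCDF_atTop hf⟩

lemma natCDF_mul_add_mul (hf : Summable f) (hg : Summable g) (a b : ℝ) :
    natCDF (fun k => a * f k + b * g k) = fun x => a * natCDF f x + b * natCDF g x := by
  funext x
  rw [natCDF, natCDF, natCDF, ← tsum_mul_left, ← tsum_mul_left,
    ← ((hf.ite_natCast_le x).mul_left a).tsum_add ((hg.ite_natCast_le x).mul_left b)]
  exact tsum_congr fun k => by split_ifs <;> ring

end NatCDF

lemma csInf_Ioc_zero_one_inter_Ici {c : ℝ} (hc0 : 0 ≤ c) (hc1 : c ≤ 1) :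
    sInf (Ioc 0 1 ∩ Ici c) = c := by
  rcases hc0.eq_or_lt with rfl | hc
  · rw [inter_eq_left.mpr (Ioc_subset_Ioi_self.trans Ioi_subset_Ici_self), csInf_Ioc one_pos]
  · have : Ioc 0 1 ∩ Ici c = Icc c 1 := by
      ext γ
      exact ⟨fun ⟨⟨_, h1⟩, h2⟩ => ⟨h2, h1⟩, fun ⟨h2, h1⟩ => ⟨⟨hc.trans_le h2, h1⟩, h2⟩⟩
    rw [this, csInf_Icc hc1]

section Mixture

variable {ps pb : ℕ → ℝ} {α γ r : ℝ}

lemma mul_add_mul_nonneg_iff {a b : ℝ} (hα : 0 < α) (hγ : 0 < γ) (hb : 0 < b) :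
    0 ≤ α / γ * a + (1 - α / γ) * b ↔ 1 - γ / α ≤ a / b := by
  have : α / γ * a + (1 - α / γ) * b = α * b / γ * (a / b - (1 - γ / α)) := by
    field_simp
    ring
  rw [this, mul_nonneg_iff_of_pos_left (by positivity), sub_nonneg]

lemma isCDF_mixture_sub_div_iff (hps : HasSum ps 1) (hpb : HasSum pb 1)
    (hpb_pos : ∀ k, 0 < pb k) (hα : 0 < α) (hγ : 0 < γ)
    (hr : IsGLB (range fun k => ps k / pb k) r) :
    IsCDF (fun x => (α * natCDF ps x + (1 - α) * natCDF pb x - (1 - γ) * natCDF pb x) / γ) ↔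
      α * (1 - r) ≤ γ := by
  have hfun : (fun x => (α * natCDF ps x + (1 - α) * natCDF pb x - (1 - γ) * natCDF pb x) / γ)
      = natCDF (fun k => α / γ * ps k + (1 - α / γ) * pb k) := by
    rw [natCDF_mul_add_mul hps.summable hpb.summable]
    funext x
    field_simp
    ring
  have hw : HasSum (fun k => α / γ * ps k + (1 - α / γ) * pb k) 1 := by
    simpa using (hps.mul_left (α / γ)).add (hpb.mul_left (1 - α / γ))
  rw [hfun, isCDF_natCDF_iff hw]
  simp_rw [mul_add_mul_nonneg_iff hα hγ (hpb_pos _)]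
  rw [← forall_mem_range (p := (1 - γ / α ≤ ·)), ← mem_lowerBounds, ← le_isGLB_iff hr,
    sub_le_comm, le_div_iff₀ hα, mul_comm]

theorem alpha0_natCDF_mixture (hps : HasSum ps 1) (hpb : HasSum pb 1)
    (hps_nonneg : ∀ k, 0 ≤ ps k) (hpb_pos : ∀ k, 0 < pb k) (hα : α ∈ Ioc 0 1)
    (hr : IsGLB (range fun k => ps k / pb k) r) :
    alpha0 (fun x => α * natCDF ps x + (1 - α) * natCDF pb x) (natCDF pb) = α * (1 - r) := by
  have hr0 : 0 ≤ r :=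
    hr.2 (forall_mem_range.mpr fun k => div_nonneg (hps_nonneg k) (hpb_pos k).le)
  -- both weight sequences sum to `1`, so `ps` cannot exceed `pb` everywhere
  obtain ⟨k, hk⟩ : ∃ k, ps k ≤ pb k := by
    by_contra! h
    exact (hasSum_lt (fun k => (h k).le) (h 0) hpb hps).false
  have hr1 : r ≤ 1 := (hr.1 (mem_range_self k)).trans ((div_le_one (hpb_pos k)).mpr hk)
  have hset : {γ : ℝ | γ ∈ Ioc (0 : ℝ) 1 ∧ IsCDF (fun x =>
      (α * natCDF ps x + (1 - α) * natCDF pb x - (1 - γ) * natCDF pb x) / γ)}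
      = Ioc 0 1 ∩ Ici (α * (1 - r)) := by
    ext γ
    exact and_congr_right fun hγ => isCDF_mixture_sub_div_iff hps hpb hpb_pos hα.1 hγ.1 hr
  rw [alpha0, hset, csInf_Ioc_zero_one_inter_Ici (by nlinarith [hα.1]) (by nlinarith [hα.2])]

end Mixture

lemma isGLB_range_mul_pow_of_lt_one {c q : ℝ} (hc : 0 ≤ c) (hq0 : 0 ≤ q) (hq1 : q < 1) :
    IsGLB (range fun k : ℕ => c * q ^ k) 0 := by
  simpa using isGLB_of_tendsto_atTop
    (fun m n hmn => mul_le_mul_of_nonneg_left (pow_le_pow_of_le_one hq0 hq1.le hmn) hc)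
    ((tendsto_pow_atTop_nhds_zero_of_lt_one hq0 hq1).const_mul c)

lemma isLeast_range_mul_pow_of_one_le {c q : ℝ} (hc : 0 ≤ c) (hq : 1 ≤ q) :
    IsLeast (range fun k : ℕ => c * q ^ k) c :=
  ⟨⟨0, by simp⟩, forall_mem_range.mpr fun k => le_mul_of_one_le_right hc (one_le_pow₀ hq)⟩

noncomputable def poissonWeight (lam : ℝ) (k : ℕ) : ℝ :=
  lam ^ k * Real.exp (-lam) / k.factorial

lemma hasSum_poissonWeight (lam : ℝ) : HasSum (poissonWeight lam) 1 := by
  have h := (NormedSpace.expSeries_div_hasSum_exp lam).mul_right (Real.exp (-lam))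
  rw [← Real.exp_eq_exp_ℝ, ← Real.exp_add, add_neg_cancel, Real.exp_zero] at h
  exact h.congr_fun fun k => (div_mul_eq_mul_div _ _ _).symm

lemma poissonWeight_pos {lam : ℝ} (hlam : 0 < lam) (k : ℕ) : 0 < poissonWeight lam k := by
  unfold poissonWeight
  positivity

lemma poissonWeight_div_poissonWeight {ls lb : ℝ} (hlb : lb ≠ 0) (k : ℕ) :
    poissonWeight ls k / poissonWeight lb k = Real.exp (lb - ls) * (ls / lb) ^ k := by
  rw [poissonWeight, poissonWeight, div_pow, sub_eq_add_neg, Real.exp_add]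
  field_simp
  rw [mul_assoc, ← Real.exp_add, neg_add_cancel, Real.exp_zero, mul_one]

theorem alpha0_poisson_general
    (lams lamb : ℝ) (hlams : 0 < lams) (hlamb : 0 < lamb)
    (Fs Fb : ℝ → ℝ) (hFs : Fs = poissonCDF lams) (hFb : Fb = poissonCDF lamb)
    (α : ℝ) (hα : α ∈ Set.Ioc (0 : ℝ) 1)
    (F : ℝ → ℝ) (hF : F = fun x => α * Fs x + (1 - α) * Fb x) :
    (lams < lamb → alpha0 F Fb = α) ∧
    (lamb < lams → alpha0 F Fb = α * (1 - Real.exp (lamb - lams))) := by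
  subst hF hFs hFb
  have hratio : (fun k => poissonWeight lams k / poissonWeight lamb k)
      = fun k => Real.exp (lamb - lams) * (lams / lamb) ^ k :=
    funext (poissonWeight_div_poissonWeight hlamb.ne')
  have alpha0_eq : ∀ r, IsGLB (range fun k => Real.exp (lamb - lams) * (lams / lamb) ^ k) r →
      alpha0 (fun x => α * poissonCDF lams x + (1 - α) * poissonCDF lamb x) (poissonCDF lamb)
        = α * (1 - r) := fun r hr =>
    alpha0_natCDF_mixture (hasSum_poissonWeight lams) (hasSum_poissonWeight lamb)
      (fun k => (poissonWeight_pos hlams k).le) (poissonWeight_pos hlamb) hα (hratio ▸ hr)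
  refine ⟨fun hlt => ?_, fun hlt => ?_⟩
  · rw [alpha0_eq 0 (isGLB_range_mul_pow_of_lt_one (Real.exp_pos _).le (by positivity) ((div_lt_one hlamb).mpr hlt)),
      sub_zero, mul_one]
  · exact alpha0_eq _
      (isLeast_range_mul_pow_of_one_le (Real.exp_pos _).le ((one_le_div hlamb).mpr hlt.le)).isGLB

/-- Identifiability for a two-component Poisson mixture:
if λ_s < λ_b then α₀ = α; if λ_s > λ_b then α₀ = α(1 − exp(λ_b − λ_s)). -/
theorem alpha0_poisson
    (lams lamb : ℝ) (hlams : 0 < lams) (hlamb : 0 < lamb) (hne : lams ≠ lamb)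
    (Fs Fb : ℝ → ℝ) (hFs : Fs = poissonCDF lams) (hFb : Fb = poissonCDF lamb)
    (α : ℝ) (hα : α ∈ Set.Ioc (0 : ℝ) 1)
    (F : ℝ → ℝ) (hF : F = fun x => α * Fs x + (1 - α) * Fb x) :
    (lams < lamb → alpha0 F Fb = α) ∧
    (lamb < lams → alpha0 F Fb = α * (1 - Real.exp (lamb - lams))) :=
  alpha0_poisson_general lams lamb hlams hlamb Fs Fb hFs hFb α hα F hF
end

section
/- It holds that α₀ = α·(1 − essinf_m(f_s/f_b)), where essinf_m g := sup{a ∈ ℝ : m({x : g(x) < a}) = 0}. As a consequence, α₀ < α if and only if there exists c > 0 such that f_s ≥ c·f_b m-almost everywhere. -/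
open Filter Topology

open MeasureTheory

/-- The essential infimum of g with respect to Lebesgue measure:
essinf g := sup{a ∈ ℝ : m({x : g(x) < a}) = 0}. -/
noncomputable def essInfLebesgue (g : ℝ → ℝ) : ℝ :=
  sSup {a : ℝ | volume {x : ℝ | g x < a} = 0}

/-!
For `γ ∈ (0, 1]`, `(F - (1 - γ) F_b) / γ = (α F_s + (γ - α) F_b) / γ` is the primitive of
`h_γ = (α f_s + (γ - α) f_b) / γ`, a function of total integral `1`. By the Lebesgue
differentiation theorem such a primitive is a CDF exactly when `h_γ ≥ 0` a.e., that is when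
`(1 - γ / α) f_b ≤ f_s` a.e., that is when `1 - γ / α ≤ β := essinf (f_s / f_b)`. So the admissible
`γ` are those of `(0, 1]` with `γ ≥ α (1 - β)`, and as `0 ≤ β ≤ 1` their infimum is `α (1 - β)`.
-/

open Set

namespace MeasureTheory

variable {g : ℝ → ℝ}

theorem Integrable.integral_Iic_eq_add_intervalIntegral (hg : Integrable g) (x : ℝ) :
    ∫ t in Iic x, g t = (∫ t in Iic 0, g t) + ∫ t in 0..x, g t := by
  rw [← intervalIntegral.integral_Iic_sub_Iic hg.integrableOn hg.integrableOn]
  ring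

theorem Integrable.continuous_integral_Iic (hg : Integrable g) :
    Continuous fun x => ∫ t in Iic x, g t := by
  rw [funext hg.integral_Iic_eq_add_intervalIntegral]
  exact continuous_const.add (hg.continuous_primitive 0)

theorem Integrable.tendsto_integral_Iic_atTop (hg : Integrable g) :
    Tendsto (fun x => ∫ t in Iic x, g t) atTop (𝓝 (∫ t, g t)) :=
  (aecover_Iic tendsto_id).integral_tendsto_of_countably_generated hg

theorem Integrable.tendsto_integral_Iic_atBot (hg : Integrable g) :
    Tendsto (fun x => ∫ t in Iic x, g t) atBot (𝓝 0) := by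
  have h := ((aecover_Ioi tendsto_id).integral_tendsto_of_countably_generated hg).const_sub
    (∫ t, g t)
  rw [sub_self] at h
  refine h.congr fun x => ?_
  rw [← intervalIntegral.integral_Iic_add_Ioi (b := x) hg.integrableOn hg.integrableOn, id,
    add_sub_cancel_right]

theorem Integrable.monotone_integral_Iic_iff (hg : Integrable g) :
    Monotone (fun x => ∫ t in Iic x, g t) ↔ 0 ≤ᵐ[volume] g := by
  refine ⟨fun hmono => ?_, fun hpos x y hxy => ?_⟩
  · have hmono' : Monotone fun x => ∫ t in 0..x, g t := fun x y hxy => by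
      simpa only [hg.integral_Iic_eq_add_intervalIntegral x,
        hg.integral_Iic_eq_add_intervalIntegral y, add_le_add_iff_left] using hmono hxy
    filter_upwards [LocallyIntegrable.ae_hasDerivAt_integral hg.locallyIntegrable] with x hx
    exact (hx 0).deriv ▸ hmono'.deriv_nonneg
  · exact setIntegral_mono_set hg.integrableOn (ae_restrict_of_ae hpos)
      (Iic_subset_Iic.2 hxy).eventuallyLE

end MeasureTheory

section

variable {X : Type*} [MeasurableSpace X] {μ : Measure X}

theorem le_essInf_iff {β : Type*} [ConditionallyCompleteLinearOrder β] [TopologicalSpace β]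
    [FirstCountableTopology β] [OrderTopology β] {f : X → β} {c : β}
    (hbdd : IsBoundedUnder (· ≥ ·) (ae μ) f) (hcobdd : IsCoboundedUnder (· ≥ ·) (ae μ) f) :
    c ≤ essInf f μ ↔ ∀ᵐ x ∂μ, c ≤ f x :=
  ⟨fun hc => (ae_essInf_le hbdd).mono fun _ => hc.trans, fun h => le_essInf_of_ae_le c h hcobdd⟩

theorem ae_le_div_iff_ae_mul_le {f g : X → ℝ} (hg : ∀ᵐ x ∂μ, 0 < g x) {c : ℝ} :
    (∀ᵐ x ∂μ, c ≤ f x / g x) ↔ ∀ᵐ x ∂μ, c * g x ≤ f x :=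
  eventually_congr (hg.mono fun _ hx => le_div_iff₀ hx)

theorem le_one_of_ae_const_mul_le {f g : X → ℝ}
    (hf : Integrable f μ) (hg : Integrable g μ) (hf1 : ∫ x, f x ∂μ = 1) (hg1 : ∫ x, g x ∂μ = 1)
    {c : ℝ} (h : ∀ᵐ x ∂μ, c * g x ≤ f x) : c ≤ 1 := by
  simpa [integral_const_mul, hf1, hg1] using integral_mono_ae (hg.const_mul c) hf h

end

theorem isCDF_integral_Iic_iff {g : ℝ → ℝ} (hg : Integrable g) :
    IsCDF (fun x => ∫ t in Iic x, g t) ↔ 0 ≤ᵐ[volume] g ∧ ∫ t, g t = 1 := by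
  rw [IsCDF, hg.monotone_integral_Iic_iff]
  refine ⟨fun ⟨hpos, _, _, htop⟩ => ⟨hpos, tendsto_nhds_unique hg.tendsto_integral_Iic_atTop htop⟩,
    fun ⟨hpos, hone⟩ => ⟨hpos, fun x => hg.continuous_integral_Iic.continuousWithinAt,
      hg.tendsto_integral_Iic_atBot, hone ▸ hg.tendsto_integral_Iic_atTop⟩⟩

theorem isCDF_mixture_sub_div_iff_s4 {Fs Fb fs fb : ℝ → ℝ} (hfs : Integrable fs) (hfb : Integrable fb)
    (hFs : ∀ x, Fs x = ∫ t in Iic x, fs t) (hFb : ∀ x, Fb x = ∫ t in Iic x, fb t)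
    (hfs1 : ∫ t, fs t = 1) (hfb1 : ∫ t, fb t = 1) {α γ : ℝ} (hα : 0 < α) (hγ : 0 < γ) :
    IsCDF (fun x => (α * Fs x + (1 - α) * Fb x - (1 - γ) * Fb x) / γ) ↔
      ∀ᵐ x, (1 - γ / α) * fb x ≤ fs x := by
  set h : ℝ → ℝ := fun t => (α * fs t + (γ - α) * fb t) / γ
  have hint : Integrable h := ((hfs.const_mul α).add (hfb.const_mul (γ - α))).div_const γ
  have setIntegral_h : ∀ s : Set ℝ,
      ∫ t in s, h t = (α * (∫ t in s, fs t) + (γ - α) * ∫ t in s, fb t) / γ :=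
    fun s => by
      rw [integral_div, integral_add (hfs.const_mul α).integrableOn
        (hfb.const_mul (γ - α)).integrableOn, integral_const_mul, integral_const_mul]
  have hG : (fun x => (α * Fs x + (1 - α) * Fb x - (1 - γ) * Fb x) / γ) =
      fun x => ∫ t in Iic x, h t := funext fun x => by
    rw [setIntegral_h, hFs, hFb]; ring_nf
  have h1 : ∫ t, h t = 1 := by
    rw [← setIntegral_univ, setIntegral_h, setIntegral_univ, setIntegral_univ, hfs1, hfb1]
    field_simp; ring
  rw [hG, isCDF_integral_Iic_iff hint, and_iff_left h1]
  refine eventually_congr (Eventually.of_forall fun x => ?_)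
  have : (1 - γ / α) * fb x = (α - γ) * fb x / α := by field_simp
  rw [Pi.zero_apply, le_div_iff₀ hγ, this, div_le_iff₀ hα]
  constructor <;> intro <;> linarith

theorem csInf_Ioc_inter_Ici {a : ℝ} (ha₀ : 0 ≤ a) (ha₁ : a ≤ 1) :
    sInf {γ : ℝ | γ ∈ Ioc 0 1 ∧ a ≤ γ} = a := by
  rcases ha₀.eq_or_lt with rfl | ha₀
  · have : {γ : ℝ | γ ∈ Ioc 0 1 ∧ 0 ≤ γ} = Ioc 0 1 := by
      ext γ; simpa using fun h _ => h.le
    rw [this, csInf_Ioc zero_lt_one]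
  · have : {γ : ℝ | γ ∈ Ioc 0 1 ∧ a ≤ γ} = Icc a 1 := by
      ext γ; simp only [mem_ofPred_eq, mem_Ioc, mem_Icc]
      exact ⟨fun ⟨⟨_, h1⟩, h2⟩ => ⟨h2, h1⟩, fun ⟨h2, h1⟩ => ⟨⟨ha₀.trans_le h2, h1⟩, h2⟩⟩
    rw [this, csInf_Icc ha₁]

theorem alpha0_absolutely_continuous_general
    (Fs Fb fs fb : ℝ → ℝ) (hFs : IsCDF Fs) (hFb : IsCDF Fb)
    (hfb_pos : ∀ᵐ x ∂volume, 0 < fb x)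
    (hfs_int : Integrable fs volume) (hfb_int : Integrable fb volume)
    (hFs_dens : ∀ x : ℝ, Fs x = ∫ t in Set.Iic x, fs t)
    (hFb_dens : ∀ x : ℝ, Fb x = ∫ t in Set.Iic x, fb t)
    (α : ℝ) (hα : α ∈ Set.Ioc (0 : ℝ) 1)
    (F : ℝ → ℝ) (hF : F = fun x => α * Fs x + (1 - α) * Fb x) :
    alpha0 F Fb = α * (1 - essInfLebesgue (fun x => fs x / fb x)) ∧
    (alpha0 F Fb < α ↔ ∃ c : ℝ, 0 < c ∧ ∀ᵐ x ∂volume, c * fb x ≤ fs x) := by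
  obtain ⟨hfs_nonneg, hfs_one⟩ := (isCDF_integral_Iic_iff hfs_int).1 (funext hFs_dens ▸ hFs)
  obtain ⟨-, hfb_one⟩ := (isCDF_integral_Iic_iff hfb_int).1 (funext hFb_dens ▸ hFb)
  obtain ⟨hα0, hα1⟩ := hα
  have hfs_nonneg' : ∀ᵐ x, 0 * fb x ≤ fs x := hfs_nonneg.mono fun x hx => by simpa using hx
  set β := essInf (fun x => fs x / fb x) volume
  have hβ : ∀ c, c ≤ β ↔ ∀ᵐ x, c * fb x ≤ fs x := fun c => by
    rw [← ae_le_div_iff_ae_mul_le hfb_pos]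
    refine le_essInf_iff ⟨0, ?_⟩ ⟨1, fun c hc => ?_⟩
    · exact (ae_le_div_iff_ae_mul_le hfb_pos).2 hfs_nonneg'
    · exact le_one_of_ae_const_mul_le hfs_int hfb_int hfs_one hfb_one
        ((ae_le_div_iff_ae_mul_le hfb_pos).1 hc)
  have hβ0 : 0 ≤ β := (hβ 0).2 hfs_nonneg'
  have hβ1 : β ≤ 1 := le_one_of_ae_const_mul_le hfs_int hfb_int hfs_one hfb_one ((hβ β).1 le_rfl)
  have halpha0 : alpha0 F Fb = α * (1 - β) := by
    rw [alpha0, hF]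
    refine (congrArg sInf (Set.ext fun γ => and_congr_right fun hγ => ?_)).trans
      (csInf_Ioc_inter_Ici (by nlinarith [hα0]) (by nlinarith [hα1]))
    rw [isCDF_mixture_sub_div_iff_s4 hfs_int hfb_int hFs_dens hFb_dens hfs_one hfb_one hα0 hγ.1,
      ← hβ, sub_le_comm, le_div_iff₀ hα0, mul_comm]
  refine ⟨by rw [halpha0, essInfLebesgue, ← essInf_eq_sSup], ?_⟩
  calc alpha0 F Fb < α ↔ 0 < β := by rw [halpha0]; constructor <;> intro <;> nlinarith [hα0]
    _ ↔ ∃ c, 0 < c ∧ c ≤ β := ⟨fun h => ⟨β, h, le_rfl⟩, fun ⟨c, hc, hcβ⟩ => hc.trans_le hcβ⟩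
    _ ↔ _ := by simp only [hβ]

/-- Lemma 4: for absolutely continuous components,
α₀ = α(1 − essinf (f_s/f_b)), and α₀ < α iff f_s ≥ c·f_b a.e. for some c > 0. -/
theorem alpha0_absolutely_continuous
    (Fs Fb fs fb : ℝ → ℝ) (hFs : IsCDF Fs) (hFb : IsCDF Fb) (hne : Fs ≠ Fb)
    (hfs_nonneg : ∀ᵐ x ∂volume, 0 ≤ fs x) (hfb_nonneg : ∀ᵐ x ∂volume, 0 ≤ fb x)
    (hfb_pos : ∀ᵐ x ∂volume, 0 < fb x)
    (hfs_int : Integrable fs volume) (hfb_int : Integrable fb volume)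
    (hFs_dens : ∀ x : ℝ, Fs x = ∫ t in Set.Iic x, fs t)
    (hFb_dens : ∀ x : ℝ, Fb x = ∫ t in Set.Iic x, fb t)
    (α : ℝ) (hα : α ∈ Set.Ioc (0 : ℝ) 1)
    (F : ℝ → ℝ) (hF : F = fun x => α * Fs x + (1 - α) * Fb x) :
    alpha0 F Fb = α * (1 - essInfLebesgue (fun x => fs x / fb x)) ∧
    (alpha0 F Fb < α ↔ ∃ c : ℝ, 0 < c ∧ ∀ᵐ x ∂volume, c * fb x ≤ fs x) :=
  alpha0_absolutely_continuous_general Fs Fb fs fb hFs hFb hfb_pos hfs_int hfb_int hFs_dens hFb_dens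
    α hα F hF
end

section
/- For every γ ∈ (0,1], inf over CDFs W of n⁻¹ Σ_{i=1}^n (W(x_i) − (𝔽_n(x_i) − (1−γ)F_b(x_i))/γ)² equals inf over CDFs B of n⁻¹ Σ_{i=1}^n (B(y_i) − (𝔾_n(y_i) − (1−γ)F_b(Ψ(y_i)))/γ)². That is, the criterion function γ d_n(F̂_{s,n}^γ, F̌_{s,n}^γ) is invariant under the monotone transformation Ψ of the data. -/
open Filter Topology

lemma IsCDF.nonneg_s8 {G : ℝ → ℝ} (hG : IsCDF G) (t : ℝ) : 0 ≤ G t := by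
  obtain ⟨hmono, -, hbot, -⟩ := hG
  refine le_of_tendsto hbot ?_
  filter_upwards [eventually_le_atBot t] with s hs using hmono hs

lemma IsCDF.le_one_s8 {G : ℝ → ℝ} (hG : IsCDF G) (t : ℝ) : G t ≤ 1 := by
  obtain ⟨hmono, -, -, htop⟩ := hG
  refine ge_of_tendsto htop ?_
  filter_upwards [eventually_ge_atTop t] with s hs using hmono hs

/-- Step CDF realizing prescribed monotone values in [0,1] at finitely many points. -/
lemma exists_cdf_of_values {n : ℕ} (hn : 0 < n) (z b : Fin n → ℝ)
    (hmono : ∀ i j, z i ≤ z j → b i ≤ b j)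
    (h0 : ∀ i, 0 ≤ b i) (h1 : ∀ i, b i ≤ 1) :
    ∃ W : ℝ → ℝ, IsCDF W ∧ ∀ i, W (z i) = b i := by
  haveI : Nonempty (Fin n) := ⟨⟨0, hn⟩⟩
  have hne : (Finset.univ : Finset (Fin n)).Nonempty := Finset.univ_nonempty
  set M : ℝ := Finset.univ.sup' hne z with hM
  set S : ℝ → ℝ := fun t => Finset.univ.sup' hne (fun i => if z i ≤ t then b i else 0) with hS
  set U : ℝ → ℝ := fun t => min 1 (max 0 (t - M)) with hU
  have hSz : ∀ i, z i ≤ M := fun i => Finset.le_sup' z (Finset.mem_univ i)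
  have hSmono : Monotone S := by
    intro s t hst
    refine Finset.sup'_le _ _ fun i _ => ?_
    refine le_trans ?_ (Finset.le_sup' (fun i => if z i ≤ t then b i else 0) (Finset.mem_univ i))
    by_cases h : z i ≤ s
    · rw [if_pos h, if_pos (h.trans hst)]
    · rw [if_neg h]
      by_cases h' : z i ≤ t
      · rw [if_pos h']; exact h0 i
      · rw [if_neg h']
  have hSnn : ∀ t, 0 ≤ S t := by
    intro t
    refine le_trans ?_ (Finset.le_sup' (fun i => if z i ≤ t then b i else 0)
      (Finset.mem_univ (Classical.arbitrary (Fin n))))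
    split_ifs with h
    · exact h0 _
    · exact le_refl 0
  have hSle1 : ∀ t, S t ≤ 1 := by
    intro t
    refine Finset.sup'_le _ _ fun i _ => ?_
    split_ifs with h
    · exact h1 i
    · exact zero_le_one
  have hUcont : Continuous U :=
    continuous_const.min (continuous_const.max (continuous_id.sub continuous_const))
  have hUmono : Monotone U := by
    intro s t hst
    exact min_le_min le_rfl (max_le_max le_rfl (by linarith))
  set W : ℝ → ℝ := fun t => max (S t) (U t) with hWdef
  have hUnn : ∀ t, 0 ≤ U t := fun t => le_min zero_le_one (le_max_left 0 _)
  have hUle1 : ∀ t, U t ≤ 1 := fun t => min_le_left _ _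
  -- right continuity of S : eventually constant
  have hScont : ∀ t₀ : ℝ, ContinuousWithinAt S (Set.Ici t₀) t₀ := by
    intro t₀
    -- find m > t₀ with S constant on [t₀, m)
    obtain ⟨m, hm, hconst⟩ : ∃ m, t₀ < m ∧ ∀ t, t₀ ≤ t → t < m → S t = S t₀ := by
      by_cases hT : ∃ i, t₀ < z i
      · obtain ⟨m, hmem, hmin⟩ := Finset.exists_min_image (Finset.univ.filter fun i => t₀ < z i) z
          (by obtain ⟨i, hi⟩ := hT; exact ⟨i, by simp [hi]⟩)
        simp only [Finset.mem_filter] at hmem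
        refine ⟨z m, hmem.2, fun t ht ht' => ?_⟩
        refine Finset.sup'_congr hne rfl fun i _ => ?_
        by_cases h : z i ≤ t₀
        · rw [if_pos (h.trans ht), if_pos h]
        · push_neg at h
          have : t < z i := lt_of_lt_of_le ht' (hmin i (by simp [h]))
          rw [if_neg (not_le.2 this), if_neg (not_le.2 h)]
      · push_neg at hT
        refine ⟨t₀ + 1, by linarith, fun t ht ht' => ?_⟩
        refine Finset.sup'_congr hne rfl fun i _ => ?_
        rw [if_pos ((hT i).trans ht), if_pos (hT i)]
    have hev : S =ᶠ[𝓝[Set.Ici t₀] t₀] (fun _ => S t₀) := by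
      have : Set.Iio m ∈ 𝓝[Set.Ici t₀] t₀ :=
        nhdsWithin_le_nhds (Iio_mem_nhds hm)
      filter_upwards [this, self_mem_nhdsWithin] with t h1t h2t
      exact hconst t h2t h1t
    exact (continuousWithinAt_const.congr_of_eventuallyEq hev (hconst t₀ le_rfl (by linarith)))
  have hWcont : ∀ t₀ : ℝ, ContinuousWithinAt W (Set.Ici t₀) t₀ :=
    fun t₀ => (hScont t₀).max (hUcont.continuousWithinAt)
  have hWmono : Monotone W := fun s t h => max_le_max (hSmono h) (hUmono h)
  -- tendsto at bot
  have hWbot : Tendsto W atBot (𝓝 0) := by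
    have hev : ∀ᶠ t in atBot, W t = 0 := by
      obtain ⟨m0, hmem0, hmin0⟩ := Finset.exists_min_image (Finset.univ : Finset (Fin n)) z hne
      filter_upwards [eventually_le_atBot (min (z m0 - 1) M)] with t ht
      have ht1 : t < z m0 := by
        have := ht.trans (min_le_left _ _); linarith
      have ht2 : t ≤ M := ht.trans (min_le_right _ _)
      have hS0 : S t = 0 := by
        refine le_antisymm (Finset.sup'_le _ _ fun i _ => ?_) (hSnn t)
        have : ¬ z i ≤ t := by
          intro h
          exact absurd (lt_of_lt_of_le ht1 (hmin0 i (Finset.mem_univ i))) (not_lt.2 h)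
        rw [if_neg this]
      have hU0 : U t = 0 := by
        refine le_antisymm ?_ (hUnn t)
        rw [hU]
        simp only [min_le_iff, max_le_iff]
        right; constructor; linarith; linarith
      rw [hWdef]; simp [hS0, hU0]
    exact (tendsto_congr' hev).2 tendsto_const_nhds |>.congr' (by filter_upwards with t; rfl)
  have hWtop : Tendsto W atTop (𝓝 1) := by
    have hUtop : Tendsto U atTop (𝓝 1) := by
      have hev : ∀ᶠ t in atTop, U t = 1 := by
        filter_upwards [eventually_ge_atTop (M + 1)] with t ht
        have h2 : (1:ℝ) ≤ t - M := by linarith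
        exact le_antisymm (hUle1 t) (le_min le_rfl (h2.trans (le_max_right _ _)))
      exact (tendsto_congr' hev).2 tendsto_const_nhds
    refine tendsto_of_tendsto_of_tendsto_of_le_of_le hUtop tendsto_const_nhds
      (fun t => le_max_right _ _) (fun t => max_le (hSle1 t) (hUle1 t))
  refine ⟨W, ⟨hWmono, hWcont, hWbot, hWtop⟩, fun j => ?_⟩
  have hUj : U (z j) = 0 := by
    have h : z j - M ≤ 0 := by have := hSz j; linarith
    exact le_antisymm ((min_le_right _ _).trans (max_le le_rfl h)) (hUnn _)
  have hSj : S (z j) = b j := by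
    refine le_antisymm (Finset.sup'_le _ _ fun i _ => ?_)
      (le_trans ?_ (Finset.le_sup' (fun i => if z i ≤ z j then b i else 0) (Finset.mem_univ j)))
    · split_ifs with h
      · exact hmono i j h
      · exact h0 j
    · rw [if_pos le_rfl]
  rw [hWdef]
  simp [hUj, hSj, h0 j]

lemma psi_inv_section {Ψ : ℝ → ℝ} (hΨcont : Continuous Ψ) (hΨmono : Monotone Ψ)
    (hΨsurj : Function.Surjective Ψ) (r : ℝ) :
    Ψ (sInf {t : ℝ | r ≤ Ψ t}) = r := by
  obtain ⟨t0, ht0⟩ := hΨsurj r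
  obtain ⟨t1, ht1⟩ := hΨsurj (r - 1)
  have hne : {t : ℝ | r ≤ Ψ t}.Nonempty := ⟨t0, ht0.ge⟩
  have hbdd : BddBelow {t : ℝ | r ≤ Ψ t} := by
    refine ⟨t1, fun t ht => ?_⟩
    by_contra h
    push_neg at h
    have := hΨmono h.le
    rw [ht1] at this
    have : r ≤ r - 1 := le_trans ht this
    linarith
  have hclosed : IsClosed {t : ℝ | r ≤ Ψ t} := isClosed_le continuous_const hΨcont
  have hmem : sInf {t : ℝ | r ≤ Ψ t} ∈ {t : ℝ | r ≤ Ψ t} := hclosed.csInf_mem hne hbdd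
  have h1 : r ≤ Ψ (sInf {t : ℝ | r ≤ Ψ t}) := hmem
  have h2 : Ψ (sInf {t : ℝ | r ≤ Ψ t}) ≤ r := by
    have : sInf {t : ℝ | r ≤ Ψ t} ≤ t0 := csInf_le hbdd ht0.ge
    calc Ψ (sInf {t : ℝ | r ≤ Ψ t}) ≤ Ψ t0 := hΨmono this
    _ = r := ht0
  linarith

/-- Theorem 1 (second part): the criterion function γ dₙ(F̂ₛₙᵞ, F̌ₛₙᵞ) is invariant
under the monotone transformation Ψ of the data. -/
theorem criterion_invariant_monotone_transform
    (Fb : ℝ → ℝ) (hFb : IsCDF Fb)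
    (Ψ : ℝ → ℝ) (hΨcont : Continuous Ψ) (hΨmono : Monotone Ψ)
    (hΨsurj : Function.Surjective Ψ)
    (Ψinv : ℝ → ℝ) (hΨinv : Ψinv = fun y => sInf {t : ℝ | y ≤ Ψ t})
    (n : ℕ) (hn : 0 < n) (x : Fin n → ℝ)
    (Fn : ℝ → ℝ) (hFn : Fn = fun t => (n : ℝ)⁻¹ * ∑ i, if x i ≤ t then (1 : ℝ) else 0)
    (y : Fin n → ℝ) (hy : y = fun i => Ψinv (x i))
    (Gn : ℝ → ℝ) (hGn : Gn = fun t => (n : ℝ)⁻¹ * ∑ i, if y i ≤ t then (1 : ℝ) else 0) :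
    ∀ γ ∈ Set.Ioc (0 : ℝ) 1,
      sInf {v : ℝ | ∃ W : ℝ → ℝ, IsCDF W ∧
          v = (n : ℝ)⁻¹ * ∑ i, (W (x i) - (Fn (x i) - (1 - γ) * Fb (x i)) / γ) ^ 2} =
      sInf {v : ℝ | ∃ B : ℝ → ℝ, IsCDF B ∧
          v = (n : ℝ)⁻¹ * ∑ i, (B (y i) - (Gn (y i) - (1 - γ) * Fb (Ψ (y i))) / γ) ^ 2} := by
  intro γ hγ
  -- basic facts
  have hsec : ∀ i, Ψ (y i) = x i := by
    intro i
    rw [hy, hΨinv]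
    exact psi_inv_section hΨcont hΨmono hΨsurj (x i)
  have hord : ∀ i j, x i ≤ x j ↔ y i ≤ y j := by
    intro i j
    constructor
    · intro h
      rw [hy, hΨinv]
      simp only
      refine csInf_le_csInf ?_ ?_ ?_
      · obtain ⟨t1, ht1⟩ := hΨsurj (x i - 1)
        refine ⟨t1, fun t ht => ?_⟩
        by_contra hc
        push_neg at hc
        have := (hΨmono hc.le).trans_lt (by rw [ht1]; linarith : Ψ t1 < x i)
        exact absurd ht (not_le.2 (lt_of_le_of_lt (le_of_eq rfl) this)).elim
      · obtain ⟨t0, ht0⟩ := hΨsurj (x j)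
        exact ⟨t0, ht0.ge⟩
      · intro t ht
        exact le_trans h ht
    · intro h
      have := hΨmono h
      rwa [hsec i, hsec j] at this
  have hGnFn : ∀ j, Gn (y j) = Fn (x j) := by
    intro j
    rw [hGn, hFn]
    simp only
    congr 1
    refine Finset.sum_congr rfl fun i _ => ?_
    rw [if_congr ((hord i j).symm) rfl rfl]
  -- the two sets are equal
  congr 1
  ext v
  simp only [Set.mem_setOf_eq]
  constructor
  · rintro ⟨W, hW, rfl⟩
    obtain ⟨B, hB, hBval⟩ := exists_cdf_of_values hn y (fun i => W (x i))
      (fun i j hij => hW.1 ((hord i j).2 hij))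
      (fun i => hW.nonneg_s8 _) (fun i => hW.le_one_s8 _)
    refine ⟨B, hB, ?_⟩
    congr 1
    refine Finset.sum_congr rfl fun i _ => ?_
    rw [hBval i, hGnFn i, hsec i]
  · rintro ⟨B, hB, rfl⟩
    obtain ⟨W, hW, hWval⟩ := exists_cdf_of_values hn x (fun i => B (y i))
      (fun i j hij => hB.1 ((hord i j).1 hij))
      (fun i => hB.nonneg_s8 _) (fun i => hB.le_one_s8 _)
    refine ⟨W, hW, ?_⟩
    congr 1
    refine Finset.sum_congr rfl fun i _ => ?_
    rw [hWval i, hGnFn i, hsec i]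
end

section
/- If θ* ∈ K minimizes θ ↦ Σ_{i=1}^n (θ_i − V_i)² over K, then the vector θ̂ defined by θ̂_i := min(max(θ*_i, 0), 1) belongs to K' and minimizes θ ↦ Σ_{i=1}^n (θ_i − V_i)² over K'. -/
/-- The residual `a - clamp(a,0,1)` is monotone in `a`. -/
lemma clamp_resid_mono {a b : ℝ} (h : a ≤ b) :
    a - min (max a 0) 1 ≤ b - min (max b 0) 1 := by
  rcases le_total a 0 with ha | ha <;> rcases le_total b 0 with hb | hb <;>
    rcases le_total a 1 with ha1 | ha1 <;> rcases le_total b 1 with hb1 | hb1 <;>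
    simp [max_eq_left, max_eq_right, min_eq_left, min_eq_right, *] <;> linarith

/-- Pointwise nonnegativity of the cross term. -/
lemma cross_nonneg {s t : ℝ} (ht0 : 0 ≤ t) (ht1 : t ≤ 1) :
    0 ≤ (t - min (max s 0) 1) * (min (max s 0) 1 - s) := by
  rcases le_total s 0 with hs | hs
  · have : min (max s 0) 1 = 0 := by
      rw [max_eq_right hs, min_eq_left zero_le_one]
    rw [this]; nlinarith
  · rcases le_total s 1 with hs1 | hs1
    · have : min (max s 0) 1 = s := by
        rw [max_eq_left hs, min_eq_left hs1]
      rw [this]; nlinarith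
    · have : min (max s 0) 1 = 1 := by
        rw [max_eq_left hs, min_eq_right hs1]
      rw [this]; nlinarith

/-- Lemma 1 (projection step): if θ* is the isotonic regression of V (the least
squares projection onto the cone of non-decreasing vectors), then its pointwise
truncation to [0,1] minimizes the least-squares criterion over all
non-decreasing vectors with entries in [0,1]. -/
theorem truncated_isotonic_regression_minimizes
    (n : ℕ) (hn : 1 ≤ n) (V : Fin n → ℝ)
    (θstar : Fin n → ℝ) (hθstar_mono : Monotone θstar)
    (hθstar_min : ∀ θ : Fin n → ℝ, Monotone θ →
      ∑ i, (θstar i - V i) ^ 2 ≤ ∑ i, (θ i - V i) ^ 2)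
    (θhat : Fin n → ℝ) (hθhat : θhat = fun i => min (max (θstar i) 0) 1) :
    (Monotone θhat ∧ ∀ i, θhat i ∈ Set.Icc (0 : ℝ) 1) ∧
    (∀ θ : Fin n → ℝ, (Monotone θ ∧ ∀ i, θ i ∈ Set.Icc (0 : ℝ) 1) →
      ∑ i, (θhat i - V i) ^ 2 ≤ ∑ i, (θ i - V i) ^ 2) := by
  subst hθhat
  refine ⟨⟨fun i j h => min_le_min (max_le_max (hθstar_mono h) le_rfl) le_rfl,
    fun i => ⟨le_min (le_max_right _ _) zero_le_one, min_le_right _ _⟩⟩, ?_⟩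
  rintro θ ⟨hmono, hicc⟩
  set c : Fin n → ℝ := fun i => min (max (θstar i) 0) 1 with hc
  set φ : Fin n → ℝ := fun i => θstar i + θ i - c i with hφdef
  have hφ : Monotone φ := by
    intro i j h
    have h1 := clamp_resid_mono (hθstar_mono h)
    have h2 := hmono h
    simp only [hφdef, hc]
    linarith
  have h1 := hθstar_min φ hφ
  have hcross : 0 ≤ ∑ i, (θ i - c i) * (c i - θstar i) :=
    Finset.sum_nonneg fun i _ => cross_nonneg (hicc i).1 (hicc i).2
  have expand : ∀ i ∈ Finset.univ, (θ i - V i) ^ 2 =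
      (c i - V i) ^ 2 + ((φ i - V i) ^ 2 - (θstar i - V i) ^ 2)
        + 2 * ((θ i - c i) * (c i - θstar i)) := by
    intro i _
    simp only [hφdef, hc]
    ring
  have hsum : ∑ i, (θ i - V i) ^ 2 =
      ∑ i, (c i - V i) ^ 2 + (∑ i, (φ i - V i) ^ 2 - ∑ i, (θstar i - V i) ^ 2)
        + 2 * ∑ i, (θ i - c i) * (c i - θstar i) := by
    rw [Finset.sum_congr rfl expand]
    simp [Finset.sum_add_distrib, Finset.sum_sub_distrib, Finset.mul_sum]
  rw [hsum]
  linarith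
end

section
/- The function c : (0,1) → ℝ defined by c(γ) := inf over CDFs W of (n⁻¹ Σ_{i=1}^n (𝔽_n(x_i) − γW(x_i) − (1−γ)F_b(x_i))²)^{1/2} is non-increasing and convex on (0,1). (In the paper's notation, γ d_n(F̂_{s,n}^γ, F̌_{s,n}^γ) is a non-increasing convex function of γ on (0,1).) -/
open Filter Topology

/-!
Both claims hold for `γ ↦ inf_{w ∈ C} φ (v - γ w - (1 - γ) w₀)` whenever `C` is convex,
`w₀ ∈ C` and `φ` is convex; here `C` is the set of CDFs, `w₀ = F_b`, `v = 𝔽_n` and `φ = d_n`.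
As `C` is star-shaped about `w₀`, for `γ₁ ≤ γ₂` every mixture `γ₁ w + (1 - γ₁) w₀` is also a
mixture `γ₂ w' + (1 - γ₂) w₀` with `w' ∈ C`, so the infimum can only decrease. For convexity,
`a γ₁ w₁ + b γ₂ w₂ = γ w` with `γ = a γ₁ + b γ₂` and `w ∈ C`, so the residual at `γ` is the
`(a, b)`-combination of the residuals at `γ₁` and `γ₂`, and convexity of `φ` passes to the
infimum.
-/

open Set

theorem convex_setOf_isCDF : Convex ℝ {W : ℝ → ℝ | IsCDF W} := by
  rintro W₁ ⟨mono₁, right₁, bot₁, top₁⟩ W₂ ⟨mono₂, right₂, bot₂, top₂⟩ a b ha hb hab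
  refine ⟨(mono₁.const_smul ha).add (mono₂.const_smul hb), fun t => ?_, ?_, ?_⟩
  · exact (continuousWithinAt_const.smul (right₁ t)).add (continuousWithinAt_const.smul (right₂ t))
  · have := (bot₁.const_mul a).add (bot₂.const_mul b)
    rwa [mul_zero, mul_zero, add_zero] at this
  · have := (top₁.const_mul a).add (top₂.const_mul b)
    rwa [mul_one, mul_one, hab] at this

section MixingCriterion

variable {V : Type*} [AddCommGroup V] [Module ℝ V] {φ : V → ℝ} {C : Set V} {w₀ v : V}

noncomputable def mixingCriterion (φ : V → ℝ) (C : Set V) (w₀ v : V) (γ : ℝ) : ℝ :=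
  ⨅ w : C, φ (v - γ • (w : V) - (1 - γ) • w₀)

theorem mixingCriterion_le (hφ : BddBelow (range φ)) {w : V} (hw : w ∈ C) (γ : ℝ) :
    mixingCriterion φ C w₀ v γ ≤ φ (v - γ • w - (1 - γ) • w₀) :=
  ciInf_le (hφ.mono (range_comp_subset_range _ φ)) (⟨w, hw⟩ : C)

theorem antitoneOn_mixingCriterion (hC : Convex ℝ C) (hw₀ : w₀ ∈ C) (hφ : BddBelow (range φ)) :
    AntitoneOn (mixingCriterion φ C w₀ v) (Ici 0) := by
  intro γ₁ hγ₁ γ₂ hγ₂ hle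
  have : Nonempty C := ⟨⟨w₀, hw₀⟩⟩
  refine le_ciInf fun ⟨w, hw⟩ => ?_
  have hγ₂γ₁ : γ₂ * (γ₁ / γ₂) = γ₁ :=
    mul_div_cancel_of_imp' fun h => le_antisymm (h ▸ hle) hγ₁
  have hmem : (γ₁ / γ₂) • w + (1 - γ₁ / γ₂) • w₀ ∈ C :=
    hC hw hw₀ (div_nonneg hγ₁ hγ₂) (sub_nonneg.2 (div_le_one_of_le₀ hle hγ₂)) (by ring)
  calc mixingCriterion φ C w₀ v γ₂
      ≤ φ (v - γ₂ • ((γ₁ / γ₂) • w + (1 - γ₁ / γ₂) • w₀) - (1 - γ₂) • w₀) :=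
        mixingCriterion_le hφ hmem γ₂
    _ = φ (v - γ₁ • w - (1 - γ₁) • w₀) := by
      congr 1
      match_scalars
      · ring
      · linear_combination -hγ₂γ₁
      · linear_combination hγ₂γ₁

theorem convexOn_mixingCriterion (hC : Convex ℝ C) (hw₀ : w₀ ∈ C) (hφ : BddBelow (range φ))
    (hφc : ConvexOn ℝ univ φ) : ConvexOn ℝ (Ioi 0) (mixingCriterion φ C w₀ v) := by
  refine ⟨convex_Ioi 0, fun γ₁ hγ₁ γ₂ hγ₂ a b ha hb hab => ?_⟩
  have : Nonempty C := ⟨⟨w₀, hw₀⟩⟩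
  have h₁ : 0 < γ₁ := hγ₁
  have h₂ : 0 < γ₂ := hγ₂
  set γ := a * γ₁ + b * γ₂ with hγdef
  have hγ : 0 < γ := convex_Ioi 0 hγ₁ hγ₂ ha hb hab
  simp only [mixingCriterion, smul_eq_mul, Real.mul_iInf_of_nonneg ha,
    Real.mul_iInf_of_nonneg hb]
  refine le_ciInf_add_ciInf fun ⟨w₁, hw₁⟩ ⟨w₂, hw₂⟩ => ?_
  set w := (a * γ₁ / γ) • w₁ + (b * γ₂ / γ) • w₂
  have hw : w ∈ C :=
    hC hw₁ hw₂ (by positivity) (by positivity) (by rw [← add_div, div_self hγ.ne'])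
  calc ⨅ w : C, φ (v - γ • (w : V) - (1 - γ) • w₀)
      ≤ φ (v - γ • w - (1 - γ) • w₀) := mixingCriterion_le hφ hw γ
    _ = φ (a • (v - γ₁ • w₁ - (1 - γ₁) • w₀) + b • (v - γ₂ • w₂ - (1 - γ₂) • w₀)) := by
      congr 1
      match_scalars
      · linear_combination -hab
      · field_simp
      · field_simp
      · linear_combination hab + hγdef
    _ ≤ a * φ (v - γ₁ • w₁ - (1 - γ₁) • w₀) + b * φ (v - γ₂ • w₂ - (1 - γ₂) • w₀) :=
      hφc.2 (mem_univ _) (mem_univ _) ha hb hab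

end MixingCriterion

noncomputable def empiricalL2Norm {n : ℕ} (x : Fin n → ℝ) (h : ℝ → ℝ) : ℝ :=
  √((n : ℝ)⁻¹ * ∑ i, h (x i) ^ 2)

theorem empiricalL2Norm_eq_mul_norm {n : ℕ} (x : Fin n → ℝ) (h : ℝ → ℝ) :
    empiricalL2Norm x h = √(n : ℝ)⁻¹ * ‖(WithLp.toLp 2 (h ∘ x) : EuclideanSpace ℝ (Fin n))‖ := by
  simp [empiricalL2Norm, EuclideanSpace.norm_eq, Real.sqrt_mul]

theorem convexOn_empiricalL2Norm {n : ℕ} (x : Fin n → ℝ) :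
    ConvexOn ℝ univ (empiricalL2Norm x) := by
  have := ((convexOn_norm convex_univ).comp_linearMap
    ((WithLp.linearEquiv 2 ℝ (Fin n → ℝ)).symm.toLinearMap ∘ₗ LinearMap.funLeft ℝ ℝ x)).smul
    (Real.sqrt_nonneg (n : ℝ)⁻¹)
  rw [preimage_univ] at this
  exact this.congr fun h _ => (empiricalL2Norm_eq_mul_norm x h).symm

theorem criterion_antitone_convex_general
    (Fb : ℝ → ℝ) (hFb : IsCDF Fb)
    (n : ℕ) (x : Fin n → ℝ)
    (Fn : ℝ → ℝ)
    (c : ℝ → ℝ)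
    (hc : ∀ γ : ℝ, c γ = sInf {v : ℝ | ∃ W : ℝ → ℝ, IsCDF W ∧
      v = Real.sqrt ((n : ℝ)⁻¹ *
        ∑ i, (Fn (x i) - γ * W (x i) - (1 - γ) * Fb (x i)) ^ 2)}) :
    AntitoneOn c (Set.Ioo (0 : ℝ) 1) ∧ ConvexOn ℝ (Set.Ioo (0 : ℝ) 1) c := by
  have hbdd : BddBelow (range (empiricalL2Norm x)) :=
    ⟨0, by rintro _ ⟨h, rfl⟩; exact Real.sqrt_nonneg _⟩
  have hc_eq : c = mixingCriterion (empiricalL2Norm x) {W | IsCDF W} Fb Fn := by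
    funext γ
    rw [hc γ, mixingCriterion, iInf]
    congr 1
    ext v
    simp only [mem_ofPred_eq, mem_range, Subtype.exists, exists_prop, empiricalL2Norm,
      Pi.sub_apply, Pi.smul_apply, smul_eq_mul]
    exact exists_congr fun W => and_congr_right fun _ => eq_comm
  rw [hc_eq]
  exact ⟨(antitoneOn_mixingCriterion convex_setOf_isCDF hFb hbdd).mono
      (Ioo_subset_Ioi_self.trans Ioi_subset_Ici_self),
    (convexOn_mixingCriterion convex_setOf_isCDF hFb hbdd (convexOn_empiricalL2Norm x)).subset
      Ioo_subset_Ioi_self (convex_Ioo 0 1)⟩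

/-- Lemma 8: γ ↦ γ dₙ(F̂ₛₙᵞ, F̌ₛₙᵞ) is non-increasing and convex on (0,1). -/
theorem criterion_antitone_convex
    (Fb : ℝ → ℝ) (hFb : IsCDF Fb)
    (n : ℕ) (hn : 0 < n) (x : Fin n → ℝ)
    (Fn : ℝ → ℝ) (hFn : Fn = fun t => (n : ℝ)⁻¹ * ∑ i, if x i ≤ t then (1 : ℝ) else 0)
    (c : ℝ → ℝ)
    (hc : ∀ γ : ℝ, c γ = sInf {v : ℝ | ∃ W : ℝ → ℝ, IsCDF W ∧
      v = Real.sqrt ((n : ℝ)⁻¹ *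
        ∑ i, (Fn (x i) - γ * W (x i) - (1 - γ) * Fb (x i)) ^ 2)}) :
    AntitoneOn c (Set.Ioo (0 : ℝ) 1) ∧ ConvexOn ℝ (Set.Ioo (0 : ℝ) 1) c :=
  criterion_antitone_convex_general Fb hFb n x Fn c hc
end

section
/- Suppose F = F_b (so that α₀ = 0). If c_n → ∞ as n → ∞, then P(α̂_n = 0) → 1 as n → ∞. -/
open Filter Topology MeasureTheory ProbabilityTheory

variable {Ω : Type*} [MeasurableSpace Ω]

/-- The empirical CDF of the first n observations X₁(ω), …, Xₙ(ω). -/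
noncomputable def empCDF (X : ℕ → Ω → ℝ) (n : ℕ) (ω : Ω) (x : ℝ) : ℝ :=
  (n : ℝ)⁻¹ * ∑ i ∈ Finset.range n, if X i ω ≤ x then (1 : ℝ) else 0

/-- The empirical L₂ distance dₙ(g,h) between two functions, based on the data
X₁(ω), …, Xₙ(ω). -/
noncomputable def empDist (X : ℕ → Ω → ℝ) (n : ℕ) (ω : Ω) (g h : ℝ → ℝ) : ℝ :=
  Real.sqrt ((n : ℝ)⁻¹ * ∑ i ∈ Finset.range n, (g (X i ω) - h (X i ω)) ^ 2)

/-- The criterion function Cₙ(γ) = γ dₙ(F̂ₛₙᵞ, F̌ₛₙᵞ)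
  = inf over CDFs W of dₙ(𝔽ₙ, γW + (1−γ)F_b), with Cₙ(0) = dₙ(𝔽ₙ, F_b). -/
noncomputable def critFn (Fb : ℝ → ℝ) (X : ℕ → Ω → ℝ) (n : ℕ) (γ : ℝ) (ω : Ω) : ℝ :=
  if γ = 0 then empDist X n ω (empCDF X n ω) Fb
  else sInf {v : ℝ | ∃ W : ℝ → ℝ, IsCDF W ∧
    v = empDist X n ω (empCDF X n ω) (fun x => γ * W x + (1 - γ) * Fb x)}

/-- The estimator α̂ₙ = inf{γ ∈ [0,1] : √n Cₙ(γ) ≤ cₙ}. -/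
noncomputable def hatAlpha (Fb : ℝ → ℝ) (X : ℕ → Ω → ℝ) (cn : ℝ) (n : ℕ) (ω : Ω) : ℝ :=
  sInf {γ : ℝ | γ ∈ Set.Icc (0 : ℝ) 1 ∧ Real.sqrt n * critFn Fb X n γ ω ≤ cn}


/-!
`α̂ₙ = 0` as soon as `γ = 0` is admissible, i.e. as soon as `√n Cₙ(0) ≤ cₙ`, and
`n Cₙ(0)² = ∑ᵢ (𝔽ₙ(Xᵢ) - F(Xᵢ))²`. Write `𝔽ₙ(Xᵢ) - F(Xᵢ) = n⁻¹ ∑ⱼ (1{Xⱼ ≤ Xᵢ} - F(Xᵢ))` and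
expand the square: the cross term indexed by `(j, k)` has mean zero unless `j = i` or `j = k`,
since otherwise `Xⱼ` is independent of `(Xᵢ, Xₖ)` and the centered indicator integrates to zero
against the law of `Xⱼ`. Hence `E[n Cₙ(0)²] ≤ 2`, and Markov's inequality bounds
`P(√n Cₙ(0) > cₙ)` by `2 / cₙ² → 0`.
-/

noncomputable def centeredIndicator (F : ℝ → ℝ) (x u : ℝ) : ℝ :=
  (if u ≤ x then 1 else 0) - F x

section CenteredIndicator

variable {P : Measure Ω} [IsProbabilityMeasure P] {F : ℝ → ℝ}

lemma measurable_centeredIndicator (hF : Measurable F) :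
    Measurable (Function.uncurry (centeredIndicator F)) :=
  (Measurable.ite (measurableSet_le measurable_snd measurable_fst) measurable_const
    measurable_const).sub (hF.comp measurable_fst)

variable {U : Ω → ℝ} (hlaw : ∀ x, P.real {ω | U ω ≤ x} = F x)
include hlaw

lemma measurable_of_forall_measureReal_le_eq : Measurable F :=
  Monotone.measurable fun x y hxy => by
    rw [← hlaw, ← hlaw]
    exact measureReal_mono fun ω (hω : U ω ≤ x) => hω.trans hxy

lemma abs_centeredIndicator_le_one (x u : ℝ) : |centeredIndicator F x u| ≤ 1 := by
  have h0 : 0 ≤ F x := hlaw x ▸ measureReal_nonneg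
  have h1 : F x ≤ 1 := hlaw x ▸ measureReal_le_one
  unfold centeredIndicator
  split_ifs <;> rw [abs_le] <;> constructor <;> linarith

lemma abs_centeredIndicator_mul_le_one (x u v : ℝ) :
    |centeredIndicator F x u * centeredIndicator F x v| ≤ 1 := by
  rw [abs_mul]
  exact mul_le_one₀ (abs_centeredIndicator_le_one hlaw x u) (abs_nonneg _)
    (abs_centeredIndicator_le_one hlaw x v)

lemma integral_centeredIndicator_map_eq_zero (hU : Measurable U) (x : ℝ) :
    ∫ u, centeredIndicator F x u ∂(P.map U) = 0 := by
  have : IsProbabilityMeasure (P.map U) := Measure.isProbabilityMeasure_map hU.aemeasurable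
  have hind : ∀ u : ℝ, (if u ≤ x then (1 : ℝ) else 0) = (Set.Iic x).indicator 1 u := fun u => by
    simp [Set.indicator_apply]
  simp only [centeredIndicator, hind]
  rw [integral_sub ((integrable_const 1).indicator measurableSet_Iic) (integrable_const _),
    integral_indicator_one measurableSet_Iic, map_measureReal_apply hU measurableSet_Iic,
    integral_const, probReal_univ, one_smul, ← hlaw x]
  exact sub_self _

end CenteredIndicator

lemma IndepFun.integral_centeredIndicator_mul_eq_zero {P : Measure Ω} [IsProbabilityMeasure P]
    {F : ℝ → ℝ} {β : Type*} [MeasurableSpace β] {V : Ω → β} {U : Ω → ℝ}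
    (hV : Measurable V) (hU : Measurable U) (hind : IndepFun V U P)
    (hlaw : ∀ x, P.real {ω | U ω ≤ x} = F x) {g h : β → ℝ} (hg : Measurable g)
    (hh : Measurable h) {C : ℝ} (hC : ∀ b, |h b| ≤ C) :
    ∫ ω, centeredIndicator F (g (V ω)) (U ω) * h (V ω) ∂P = 0 := by
  have : IsProbabilityMeasure (P.map V) := Measure.isProbabilityMeasure_map hV.aemeasurable
  have : IsProbabilityMeasure (P.map U) := Measure.isProbabilityMeasure_map hU.aemeasurable
  set G : β × ℝ → ℝ := fun p => centeredIndicator F (g p.1) p.2 * h p.1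
  have hGm : Measurable G :=
    ((measurable_centeredIndicator (measurable_of_forall_measureReal_le_eq hlaw)).comp
      ((hg.comp measurable_fst).prodMk measurable_snd)).mul (hh.comp measurable_fst)
  have hGint : Integrable G ((P.map V).prod (P.map U)) := by
    refine .of_bound hGm.aestronglyMeasurable C (.of_forall fun p => ?_)
    rw [Real.norm_eq_abs, abs_mul]
    exact (mul_le_of_le_one_left (abs_nonneg _)
      (abs_centeredIndicator_le_one hlaw _ _)).trans (hC _)
  calc ∫ ω, G (V ω, U ω) ∂P
      = ∫ p, G p ∂((P.map V).prod (P.map U)) := by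
        rw [← (indepFun_iff_map_prod_eq_prod_map_map hV.aemeasurable hU.aemeasurable).mp hind,
          integral_map (hV.prodMk hU).aemeasurable hGm.aestronglyMeasurable]
    _ = ∫ b, (∫ u, centeredIndicator F (g b) u ∂(P.map U)) * h b ∂(P.map V) := by
        rw [integral_prod G hGint]
        simp only [G, integral_mul_const]
    _ = 0 := by simp [integral_centeredIndicator_map_eq_zero hlaw hU]

/-- `n ∫ (𝔽ₙ - F)² d𝔽ₙ`, a Cramér–von Mises statistic. -/
noncomputable def cvmStat (F : ℝ → ℝ) (X : ℕ → Ω → ℝ) (n : ℕ) (ω : Ω) : ℝ :=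
  ∑ i ∈ Finset.range n, (empCDF X n ω (X i ω) - F (X i ω)) ^ 2

omit [MeasurableSpace Ω] in
lemma empCDF_sub_eq {X : ℕ → Ω → ℝ} {n : ℕ} (hn : n ≠ 0) (F : ℝ → ℝ) (ω : Ω) (x : ℝ) :
    empCDF X n ω x - F x = (n : ℝ)⁻¹ * ∑ j ∈ Finset.range n, centeredIndicator F x (X j ω) := by
  simp only [empCDF, centeredIndicator, Finset.sum_sub_distrib, Finset.sum_const,
    Finset.card_range, nsmul_eq_mul, mul_sub]
  field_simp

omit [MeasurableSpace Ω] in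
lemma cvmStat_eq (F : ℝ → ℝ) (X : ℕ → Ω → ℝ) (n : ℕ) (ω : Ω) :
    cvmStat F X n ω = ((n : ℝ)⁻¹) ^ 2 *
      ∑ i ∈ Finset.range n, (∑ j ∈ Finset.range n, centeredIndicator F (X i ω) (X j ω)) ^ 2 := by
  rcases eq_or_ne n 0 with rfl | hn
  · simp [cvmStat]
  · rw [cvmStat, Finset.mul_sum]
    simp only [empCDF_sub_eq hn, mul_pow]

omit [MeasurableSpace Ω] in
lemma sqrt_natCast_mul_empDist (X : ℕ → Ω → ℝ) (n : ℕ) (ω : Ω) (g h : ℝ → ℝ) :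
    √n * empDist X n ω g h = √(∑ i ∈ Finset.range n, (g (X i ω) - h (X i ω)) ^ 2) := by
  rw [empDist, ← Real.sqrt_mul n.cast_nonneg, ← mul_assoc]
  rcases eq_or_ne n 0 with rfl | hn
  · simp
  · rw [mul_inv_cancel₀ (Nat.cast_ne_zero.mpr hn), one_mul]

omit [MeasurableSpace Ω] in
lemma sqrt_natCast_mul_critFn_zero (F : ℝ → ℝ) (X : ℕ → Ω → ℝ) (n : ℕ) (ω : Ω) :
    √n * critFn F X n 0 ω = √(cvmStat F X n ω) := by
  rw [critFn, if_pos rfl, sqrt_natCast_mul_empDist]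
  rfl

omit [MeasurableSpace Ω] in
lemma hatAlpha_eq_zero_of_sqrt_mul_critFn_zero_le {Fb : ℝ → ℝ} {X : ℕ → Ω → ℝ} {cn : ℝ}
    {n : ℕ} {ω : Ω} (h : √n * critFn Fb X n 0 ω ≤ cn) : hatAlpha Fb X cn n ω = 0 :=
  IsLeast.csInf_eq ⟨⟨Set.left_mem_Icc.mpr zero_le_one, h⟩, fun _ hγ => hγ.1.1⟩

section IID

variable {P : Measure Ω} [IsProbabilityMeasure P] {F : ℝ → ℝ} {X : ℕ → Ω → ℝ}
  (hmeas : ∀ i, Measurable (X i)) (hdist : ∀ i x, P.real {ω | X i ω ≤ x} = F x)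
include hmeas hdist

lemma integrable_centeredIndicator_mul (i j k : ℕ) :
    Integrable (fun ω => centeredIndicator F (X i ω) (X j ω) *
      centeredIndicator F (X i ω) (X k ω)) P := by
  have hφ := measurable_centeredIndicator (measurable_of_forall_measureReal_le_eq (hdist 0))
  exact .of_bound (((hφ.comp ((hmeas i).prodMk (hmeas j))).mul
    (hφ.comp ((hmeas i).prodMk (hmeas k)))).aestronglyMeasurable) 1
    (.of_forall fun ω => abs_centeredIndicator_mul_le_one (hdist 0) _ _ _)

lemma integral_centeredIndicator_mul_le_one (i j k : ℕ) :
    ∫ ω, centeredIndicator F (X i ω) (X j ω) * centeredIndicator F (X i ω) (X k ω) ∂P ≤ 1 :=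
  (integral_mono (integrable_centeredIndicator_mul hmeas hdist i j k) (integrable_const 1)
    fun ω => (le_abs_self _).trans (abs_centeredIndicator_mul_le_one (hdist 0) _ _ _)).trans_eq
    (by simp)

lemma integral_centeredIndicator_mul_eq_zero (hindep : iIndepFun X P) {i j k : ℕ}
    (hji : j ≠ i) (hjk : j ≠ k) :
    ∫ ω, centeredIndicator F (X i ω) (X j ω) * centeredIndicator F (X i ω) (X k ω) ∂P = 0 :=
  IndepFun.integral_centeredIndicator_mul_eq_zero ((hmeas i).prodMk (hmeas k)) (hmeas j)
    (hindep.indepFun_prodMk hmeas i k j hji.symm hjk.symm) (hdist j) measurable_fst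
    (measurable_centeredIndicator (measurable_of_forall_measureReal_le_eq (hdist 0)))
    fun p => abs_centeredIndicator_le_one (hdist 0) p.1 p.2

lemma integrable_sq_sum_centeredIndicator (n i : ℕ) :
    Integrable (fun ω => (∑ j ∈ Finset.range n, centeredIndicator F (X i ω) (X j ω)) ^ 2) P := by
  simp_rw [sq, Finset.sum_mul_sum]
  exact integrable_finsetSum _ fun j _ => integrable_finsetSum _ fun k _ =>
    integrable_centeredIndicator_mul hmeas hdist i j k

lemma integral_sq_sum_centeredIndicator_le (hindep : iIndepFun X P) (n i : ℕ) :
    ∫ ω, (∑ j ∈ Finset.range n, centeredIndicator F (X i ω) (X j ω)) ^ 2 ∂P ≤ 2 * n := by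
  have hrow : ∀ j, ∑ k ∈ Finset.range n,
      ∫ ω, centeredIndicator F (X i ω) (X j ω) * centeredIndicator F (X i ω) (X k ω) ∂P
        ≤ if j = i then (n : ℝ) else 1 := by
    intro j
    split_ifs with hji
    · simpa using Finset.sum_le_sum fun k (_ : k ∈ Finset.range n) =>
        integral_centeredIndicator_mul_le_one hmeas hdist i j k
    · calc _ ≤ ∑ k ∈ Finset.range n, if j = k then (1 : ℝ) else 0 :=
            Finset.sum_le_sum fun k _ => by
              split_ifs with hjk
              · exact integral_centeredIndicator_mul_le_one hmeas hdist i j k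
              · exact (integral_centeredIndicator_mul_eq_zero hmeas hdist hindep hji hjk).le
        _ ≤ 1 := by rw [Finset.sum_ite_eq]; split_ifs <;> norm_num
  simp_rw [sq, Finset.sum_mul_sum]
  rw [integral_finsetSum _ fun j _ => integrable_finsetSum _ fun k _ =>
    integrable_centeredIndicator_mul hmeas hdist i j k]
  calc ∑ j ∈ Finset.range n, ∫ ω, ∑ k ∈ Finset.range n,
        centeredIndicator F (X i ω) (X j ω) * centeredIndicator F (X i ω) (X k ω) ∂P
      ≤ ∑ j ∈ Finset.range n, ((if j = i then (n : ℝ) else 0) + 1) := by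
        refine Finset.sum_le_sum fun j _ => ?_
        rw [integral_finsetSum _ fun k _ => integrable_centeredIndicator_mul hmeas hdist i j k]
        exact (hrow j).trans (by split_ifs <;> simp)
    _ ≤ 2 * n := by
        rw [Finset.sum_add_distrib, Finset.sum_ite_eq']
        split_ifs <;> simp <;> linarith [(n.cast_nonneg : (0 : ℝ) ≤ n)]

lemma integrable_cvmStat (n : ℕ) : Integrable (cvmStat F X n) P := by
  simp_rw [funext (cvmStat_eq F X n)]
  exact (integrable_finsetSum _ fun i _ =>
    integrable_sq_sum_centeredIndicator hmeas hdist n i).const_mul _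

lemma integral_cvmStat_le_two (hindep : iIndepFun X P) (n : ℕ) :
    ∫ ω, cvmStat F X n ω ∂P ≤ 2 := by
  simp_rw [cvmStat_eq F X n]
  rw [integral_const_mul, integral_finsetSum _ fun i _ =>
    integrable_sq_sum_centeredIndicator hmeas hdist n i]
  calc ((n : ℝ)⁻¹) ^ 2 * ∑ i ∈ Finset.range n,
        ∫ ω, (∑ j ∈ Finset.range n, centeredIndicator F (X i ω) (X j ω)) ^ 2 ∂P
      ≤ ((n : ℝ)⁻¹) ^ 2 * ∑ i ∈ Finset.range n, 2 * (n : ℝ) := by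
        gcongr with i
        exact integral_sq_sum_centeredIndicator_le hmeas hdist hindep n i
    _ ≤ 2 := by
        rcases eq_or_ne n 0 with rfl | hn
        · simp
        · rw [Finset.sum_const, Finset.card_range, nsmul_eq_mul]
          field_simp
          rfl

end IID

lemma tendsto_measure_lt_of_integral_le {P : Measure Ω} [IsProbabilityMeasure P]
    {Y : ℕ → Ω → ℝ} {t : ℕ → ℝ} {K : ℝ} (hY : ∀ n ω, 0 ≤ Y n ω)
    (hYint : ∀ n, Integrable (Y n) P) (hK : ∀ n, ∫ ω, Y n ω ∂P ≤ K)
    (ht : Tendsto t atTop atTop) :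
    Tendsto (fun n => P {ω | Y n ω < t n}) atTop (𝓝 1) := by
  have hmarkov : ∀ᶠ n in atTop, P.real {ω | t n ≤ Y n ω} ≤ K / t n := by
    filter_upwards [ht.eventually_gt_atTop 0] with n htn
    rw [le_div_iff₀' htn]
    exact (mul_meas_ge_le_integral_of_nonneg (.of_forall (hY n)) (hYint n) (t n)).trans (hK n)
  have hbad : Tendsto (fun n => P.real {ω | t n ≤ Y n ω}) atTop (𝓝 0) :=
    tendsto_of_tendsto_of_tendsto_of_le_of_le' tendsto_const_nhds
      (tendsto_const_nhds.div_atTop ht) (.of_forall fun _ => measureReal_nonneg) hmarkov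
  have hgood : ∀ n, P.real {ω | Y n ω < t n} = 1 - P.real {ω | t n ≤ Y n ω} := fun n => by
    rw [← probReal_compl_eq_one_sub₀
      (nullMeasurableSet_le aemeasurable_const (hYint n).aemeasurable)]
    simp [Set.compl_ofPred]
  have hreal : Tendsto (fun n => P.real {ω | Y n ω < t n}) atTop (𝓝 1) := by
    simpa [hgood] using (tendsto_const_nhds (x := (1 : ℝ))).sub hbad
  simpa [ofReal_measureReal] using ENNReal.tendsto_ofReal hreal

theorem hatAlpha_eq_zero_of_null_general
    (P : Measure Ω) [IsProbabilityMeasure P]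
    (Fb : ℝ → ℝ)
    (F : ℝ → ℝ) (hF : F = Fb)
    (X : ℕ → Ω → ℝ) (hmeas : ∀ i, Measurable (X i))
    (hindep : iIndepFun X P)
    (hdist : ∀ i, ∀ x : ℝ, (P {ω | X i ω ≤ x}).toReal = F x)
    (c : ℕ → ℝ)
    (hc_infty : Tendsto c atTop atTop) :
    Tendsto (fun n => P {ω | hatAlpha Fb X (c n) n ω = 0}) atTop (𝓝 1) := by
  subst hF
  have hsmall : Tendsto (fun n => P {ω | cvmStat F X n ω < c n ^ 2}) atTop (𝓝 1) :=
    tendsto_measure_lt_of_integral_le (fun n ω => Finset.sum_nonneg fun i _ => sq_nonneg _)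
      (integrable_cvmStat hmeas hdist) (integral_cvmStat_le_two hmeas hdist hindep)
      (by simpa [sq] using hc_infty.atTop_mul_atTop₀ hc_infty)
  refine tendsto_of_tendsto_of_tendsto_of_le_of_le' hsmall tendsto_const_nhds ?_
    (.of_forall fun _ => prob_le_one)
  filter_upwards [hc_infty.eventually_ge_atTop 0] with n hcn
  refine measure_mono fun ω (hω : cvmStat F X n ω < c n ^ 2) =>
    hatAlpha_eq_zero_of_sqrt_mul_critFn_zero_le ?_
  rw [sqrt_natCast_mul_critFn_zero]
  exact (Real.sqrt_le_left hcn).mpr hω.le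

/-- Lemma 9: if F = F_b (so α₀ = 0) and cₙ → ∞, then P(α̂ₙ = 0) → 1. -/
theorem hatAlpha_eq_zero_of_null
    (P : Measure Ω) [IsProbabilityMeasure P]
    (Fb : ℝ → ℝ) (hFb : IsCDF Fb)
    (F : ℝ → ℝ) (hF : F = Fb)
    (X : ℕ → Ω → ℝ) (hmeas : ∀ i, Measurable (X i))
    (hindep : iIndepFun X P)
    (hdist : ∀ i, ∀ x : ℝ, (P {ω | X i ω ≤ x}).toReal = F x)
    (c : ℕ → ℝ) (hc_pos : ∀ n, 0 < c n)
    (hc_infty : Tendsto c atTop atTop) :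
    Tendsto (fun n => P {ω | hatAlpha Fb X (c n) n ω = 0}) atTop (𝓝 1) :=
  hatAlpha_eq_zero_of_null_general P Fb F hF X hmeas hindep hdist c hc_infty
end
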